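/- arXiv:1007.4577 — 5 statements merged into one kernel-verified Lean document; each statement's English description precedes it below -/
import Mathlib

section
/- (Lemma 2.1) Let X be a quasimetric space with constant K ≥ 1, Ω ⊊ X a domain, φ an admissible function with constants r₀, C₀, and α > 0. Let ζ ∈ ∂Ω and x₀ ∈ Γ_{φ,ρ}(ζ,α) with 0 < ρ ≤ ρ̂₀, where ρ̂₀ = min{ r₀/2^(K+1/3), r₀/2^(α+1), r₀/(2^((3αK/2)C₀^(K+1/3)+1)(K+1/3)), (1/2^(α+1))φ(r₀/2^(K+1/3)), ρ₀ }. Set C₂' = C₀^α/3 + K·C₀^(K+1/3). Then for every C₁ ≥ 1 and every x ∈ B_K(x₀) := B_K(x₀, δ_K(x₀)/(3K)), one has B_K(x, C₁ φ⁻¹(δ_K(x))) ⊆ B_K(x₀, C₁ C₂' φ⁻¹(δ_K(x₀))). -/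
private lemma nat_le_two_pow_pred (m : ℕ) (hm : 1 ≤ m) : m ≤ 2 ^ (m - 1) := by
  calc m = (m - 1) + 1 := by omega
  _ ≤ 2 ^ (m - 1) := Nat.succ_le_of_lt Nat.lt_two_pow_self

private lemma aux_scale (ψ : ℝ → ℝ) (C₀ r₀ : ℝ) (hC₀ : 1 ≤ C₀) (hr₀ : 0 ≤ r₀)
    (hψ0 : ∀ s, 0 ≤ s → 0 ≤ ψ s)
    (hψ_mono : ∀ a b, 0 ≤ a → a ≤ b → ψ a ≤ ψ b)
    (hψ_doub : ∀ s, 0 ≤ s → s ≤ r₀ → ψ (2 * s) ≤ C₀ * ψ s)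
    (t s : ℝ) (ht : 1 < t) (hs : 0 ≤ s) (hsr : 2 ^ t * s ≤ r₀) :
    ψ (t * s) ≤ C₀ ^ t * ψ s := by
  have hC₀0 : (0:ℝ) ≤ C₀ := by linarith
  have ht0 : (0:ℝ) < t := lt_trans one_pos ht
  set y := Real.logb 2 t with hy
  have hy0 : 0 < y := Real.logb_pos one_lt_two ht
  set m : ℕ := ⌈y⌉₊ with hmdef
  have hm1 : 1 ≤ m := Nat.ceil_pos.mpr hy0
  have h2y : (2:ℝ) ^ y = t := Real.rpow_logb (by norm_num) (by norm_num) ht0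
  have ht_le : t ≤ 2 ^ ((m:ℝ)) := by
    rw [← h2y]
    exact Real.rpow_le_rpow_of_exponent_le one_le_two (Nat.le_ceil y)
  have hm_le_t : (m:ℝ) ≤ t := by
    have h1 : (m:ℝ) < y + 1 := Nat.ceil_lt_add_one hy0.le
    have h2 : (2:ℝ) ^ ((m:ℝ) - 1) < 2 ^ y :=
      Real.rpow_lt_rpow_of_exponent_lt one_lt_two (by linarith)
    have h3 : (m:ℝ) ≤ 2 ^ ((m:ℝ) - 1) := by
      have hcast : ((m:ℝ) - 1) = ((m - 1 : ℕ) : ℝ) := by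
        rw [Nat.cast_sub hm1]; norm_num
      rw [hcast, Real.rpow_natCast]
      exact_mod_cast Nat.cast_le.mpr (nat_le_two_pow_pred m hm1)
    linarith [h2y ▸ h2]
  have hiter : ∀ j : ℕ, (2:ℝ) ^ j * s ≤ 2 * r₀ → ψ ((2:ℝ) ^ j * s) ≤ C₀ ^ j * ψ s := by
    intro j
    induction j with
    | zero => intro _; simp
    | succ j ih =>
      intro h
      have hpow : (0:ℝ) < (2:ℝ) ^ j := by positivity
      have heq : (2:ℝ) ^ (j+1) * s = 2 * ((2:ℝ) ^ j * s) := by ring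
      have hle : (2:ℝ) ^ j * s ≤ r₀ := by
        rw [heq] at h; linarith
      have h1 : ψ ((2:ℝ) ^ (j+1) * s) ≤ C₀ * ψ ((2:ℝ) ^ j * s) := by
        rw [heq]; exact hψ_doub _ (by positivity) hle
      have h2 := ih (by linarith)
      calc ψ ((2:ℝ) ^ (j+1) * s) ≤ C₀ * ψ ((2:ℝ) ^ j * s) := h1
        _ ≤ C₀ * (C₀ ^ j * ψ s) := mul_le_mul_of_nonneg_left h2 hC₀0
        _ = C₀ ^ (j+1) * ψ s := by ring
  have hpow_eq : ((2:ℝ) ^ (m:ℕ) : ℝ) = (2:ℝ) ^ ((m:ℝ)) := (Real.rpow_natCast 2 m).symm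
  have h2m_le : (2:ℝ) ^ ((m:ℝ)) ≤ 2 ^ t :=
    Real.rpow_le_rpow_of_exponent_le one_le_two hm_le_t
  have h2m_s : (2:ℝ) ^ (m:ℕ) * s ≤ 2 * r₀ := by
    have : (2:ℝ) ^ ((m:ℝ)) * s ≤ 2 ^ t * s := mul_le_mul_of_nonneg_right h2m_le hs
    rw [hpow_eq]; linarith
  have hts_le : t * s ≤ (2:ℝ) ^ (m:ℕ) * s := by
    rw [hpow_eq]
    exact mul_le_mul_of_nonneg_right ht_le hs
  have h1 : ψ (t * s) ≤ ψ ((2:ℝ) ^ (m:ℕ) * s) :=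
    hψ_mono _ _ (by positivity) hts_le
  have h2 := hiter m h2m_s
  have h3 : C₀ ^ (m:ℕ) ≤ C₀ ^ t := by
    rw [← Real.rpow_natCast C₀ m]
    exact Real.rpow_le_rpow_of_exponent_le hC₀ hm_le_t
  have hψs : 0 ≤ ψ s := hψ0 s hs
  calc ψ (t * s) ≤ C₀ ^ (m:ℕ) * ψ s := le_trans h1 h2
    _ ≤ C₀ ^ t * ψ s := mul_le_mul_of_nonneg_right h3 hψs

set_option maxHeartbeats 1000000 in
/-- Lemma 2.1: for `x` in the quasiball `B_K(x₀)`, the ball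
`B_K(x, C₁ φ⁻¹(δ_K(x)))` is contained in `B_K(x₀, C₁ C₂' φ⁻¹(δ_K(x₀)))`. -/
theorem stmt_5 {X : Type*} [TopologicalSpace X]
    (K : ℝ) (hK : 1 ≤ K)
    (d : X → X → ℝ)
    (hd_nonneg : ∀ x y, 0 ≤ d x y)
    (hd_symm : ∀ x y, d x y = d y x)
    (hd_eq : ∀ x y, d x y = 0 ↔ x = y)
    (hd_tri : ∀ x y z, d x y ≤ K * (d x z + d z y))
    (Ω : Set X) (hΩopen : IsOpen Ω) (hΩconn : IsConnected Ω) (hΩne : Ω ≠ Set.univ)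
    (δ : X → ℝ) (hδ : ∀ x, δ x = sInf ((d x) '' Ωᶜ))
    (φ ψ : ℝ → ℝ) (C₀ r₀ ρ₀ : ℝ) (hC₀ : 1 ≤ C₀) (hr₀ : 0 < r₀) (hρ₀ : 0 < ρ₀)
    (hφ_nonneg : ∀ t, 0 ≤ t → 0 ≤ φ t)
    (hφ_mono : StrictMonoOn φ (Set.Ici 0))
    (hφ_surj : Set.SurjOn φ (Set.Ici 0) (Set.Ici 0))
    (hψ_maps : Set.MapsTo ψ (Set.Ici 0) (Set.Ici 0))
    (hψ_inv : Set.InvOn ψ φ (Set.Ici 0) (Set.Ici 0))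
    (hφ_doub : ∀ t, 0 ≤ t → t ≤ r₀ → φ (2 * t) ≤ C₀ * φ t)
    (hψ_doub : ∀ s, 0 ≤ s → s ≤ r₀ → ψ (2 * s) ≤ C₀ * ψ s)
    (α : ℝ) (hα : 0 < α)
    (ρ : ℝ) (hρpos : 0 < ρ)
    (hρ : ρ ≤ min (min (min (r₀ / 2 ^ (K + 1/3)) (r₀ / 2 ^ (α + 1)))
        (min (r₀ / (2 ^ ((3 * α * K / 2) * C₀ ^ (K + 1/3) + 1) * (K + 1/3)))
          ((1 / 2 ^ (α + 1)) * φ (r₀ / 2 ^ (K + 1/3))))) ρ₀)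
    (ζ : X) (hζ : ζ ∈ frontier Ω)
    (x₀ : X) (hx₀Ω : x₀ ∈ Ω) (hx₀Γ : φ (d x₀ ζ) < α * δ x₀) (hx₀ρ : δ x₀ < ρ)
    (C₁ : ℝ) (hC₁ : 1 ≤ C₁)
    (x : X) (hx : d x₀ x < δ x₀ / (3 * K)) :
    {z | d x z < C₁ * ψ (δ x)} ⊆
      {z | d x₀ z < C₁ * (C₀ ^ α / 3 + K * C₀ ^ (K + 1/3)) * ψ (δ x₀)} := by
  intro z hz
  simp only [Set.mem_setOf_eq] at hz ⊢
  have hK0 : (0:ℝ) < K := lt_of_lt_of_le one_pos hK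
  have h3K : (0:ℝ) < 3 * K := by linarith
  set s := δ x₀ with hsdef
  have hs0 : 0 < s := by
    have h := lt_of_le_of_lt (hd_nonneg x₀ x) hx
    rcases div_pos_iff.mp h with ⟨h1, _⟩ | ⟨_, h2⟩
    · exact h1
    · linarith
  have hne : Ωᶜ.Nonempty := Set.nonempty_compl.mpr hΩne
  have hSne : ∀ y : X, ((d y) '' Ωᶜ).Nonempty := fun y => hne.image _
  have hbdd : ∀ y : X, BddBelow ((d y) '' Ωᶜ) := fun y =>
    ⟨0, by rintro a ⟨w, _, rfl⟩; exact hd_nonneg y w⟩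
  have hδ_nonneg : ∀ y, 0 ≤ δ y := fun y => by
    rw [hδ]
    apply Real.sInf_nonneg
    rintro a ⟨w, _, rfl⟩; exact hd_nonneg y w
  have hδ_le : ∀ y w, w ∈ Ωᶜ → δ y ≤ d y w := fun y w hw => by
    rw [hδ]; exact csInf_le (hbdd y) ⟨w, hw, rfl⟩
  -- ψ basic facts
  have hψ0 : ∀ u, 0 ≤ u → 0 ≤ ψ u := fun u hu => hψ_maps (Set.mem_Ici.mpr hu)
  have hψ_mono : ∀ a b, 0 ≤ a → a ≤ b → ψ a ≤ ψ b := by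
    intro a b ha hab
    by_contra h
    push_neg at h
    have hb : (0:ℝ) ≤ b := le_trans ha hab
    have h2 := hφ_mono (Set.mem_Ici.mpr (hψ0 b hb)) (Set.mem_Ici.mpr (hψ0 a ha)) h
    rw [hψ_inv.2 (Set.mem_Ici.mpr hb), hψ_inv.2 (Set.mem_Ici.mpr ha)] at h2
    linarith
  -- ρ bounds
  have hρ1 : ρ ≤ r₀ / 2 ^ (K + 1/3) :=
    hρ.trans ((min_le_left _ _).trans ((min_le_left _ _).trans (min_le_left _ _)))
  have hρ2 : ρ ≤ r₀ / 2 ^ (α + 1) :=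
    hρ.trans ((min_le_left _ _).trans ((min_le_left _ _).trans (min_le_right _ _)))
  have h2Kpos : (0:ℝ) < 2 ^ (K + 1/3) := Real.rpow_pos_of_pos (by norm_num) _
  have h2αpos : (0:ℝ) < 2 ^ (α + 1) := Real.rpow_pos_of_pos (by norm_num) _
  have h2K : (2:ℝ) ^ (K + 1/3) * s ≤ r₀ := by
    have h1 : s ≤ r₀ / 2 ^ (K + 1/3) := le_trans hx₀ρ.le hρ1
    rw [le_div_iff₀ h2Kpos] at h1; linarith
  have h2α : (2:ℝ) ^ α * s ≤ r₀ := by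
    have h1 : s ≤ r₀ / 2 ^ (α + 1) := le_trans hx₀ρ.le hρ2
    rw [le_div_iff₀ h2αpos] at h1
    have h2 : (2:ℝ) ^ α ≤ 2 ^ (α + 1) :=
      Real.rpow_le_rpow_of_exponent_le one_le_two (by linarith)
    nlinarith
  -- bound on δ x
  have hδx_le : δ x ≤ (K + 1/3) * s := by
    have h1 : δ x / K - d x x₀ ≤ δ x₀ := by
      rw [hδ x₀]
      apply le_csInf (hSne x₀)
      rintro b ⟨w, hw, rfl⟩
      have h2 := hδ_le x w hw
      have h3 := hd_tri x w x₀
      have h4 : δ x ≤ K * (d x x₀ + d x₀ w) := le_trans h2 h3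
      rw [sub_le_iff_le_add, div_le_iff₀ hK0]
      nlinarith
    rw [sub_le_iff_le_add, div_le_iff₀ hK0, hd_symm x x₀] at h1
    have hx' : d x₀ x * (3 * K) < s := (lt_div_iff₀ h3K).mp hx
    nlinarith
  -- first bound : s ≤ C₀^α ψ s
  have hζc : ζ ∉ Ω := fun h => hζ.2 (by rwa [hΩopen.interior_eq])
  have hδζ : s ≤ d x₀ ζ := hδ_le x₀ ζ hζc
  have hφs : φ s < α * s :=
    lt_of_le_of_lt (hφ_mono.monotoneOn (Set.mem_Ici.mpr hs0.le)
      (Set.mem_Ici.mpr (hd_nonneg x₀ ζ)) hδζ) hx₀Γ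
  have hsψ : s ≤ ψ (α * s) := by
    have h0 : ψ (φ s) = s := hψ_inv.1 (Set.mem_Ici.mpr hs0.le)
    calc s = ψ (φ s) := h0.symm
      _ ≤ ψ (α * s) := hψ_mono _ _ (hφ_nonneg s hs0.le) hφs.le
  have hψs0 : 0 ≤ ψ s := hψ0 s hs0.le
  have hB1 : s ≤ C₀ ^ α * ψ s := by
    rcases le_or_gt α 1 with hα1 | hα1
    · have h1 : ψ (α * s) ≤ ψ s := hψ_mono _ _ (by positivity) (by nlinarith)
      have h2 : (1:ℝ) ≤ C₀ ^ α := by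
        have := Real.rpow_le_rpow_of_exponent_le hC₀ hα.le
        rwa [Real.rpow_zero] at this
      nlinarith
    · have h1 := aux_scale ψ C₀ r₀ hC₀ hr₀.le hψ0 hψ_mono hψ_doub α s hα1 hs0.le h2α
      linarith
  -- second bound : ψ (δ x) ≤ C₀^(K+1/3) ψ s
  have htK : 1 < K + 1/3 := by linarith
  have h2KK : (2:ℝ) ^ (K + 1/3) * s ≤ r₀ := h2K
  have hB2 : ψ (δ x) ≤ C₀ ^ (K + 1/3) * ψ s := by
    have h1 : ψ (δ x) ≤ ψ ((K + 1/3) * s) := hψ_mono _ _ (hδ_nonneg x) hδx_le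
    have h2 := aux_scale ψ C₀ r₀ hC₀ hr₀.le hψ0 hψ_mono hψ_doub (K + 1/3) s htK hs0.le h2KK
    linarith
  -- final assembly
  have htri := hd_tri x₀ z x
  rw [mul_add] at htri
  have hx' : d x₀ x * (3 * K) < s := (lt_div_iff₀ h3K).mp hx
  have h1 : K * d x₀ x < s / 3 := by linarith [hx']
  have h2 : K * d x z < K * (C₁ * ψ (δ x)) := by
    exact mul_lt_mul_of_pos_left hz hK0
  have hlt : d x₀ z < s / 3 + K * (C₁ * ψ (δ x)) := by linarith
  have hCα0 : (0:ℝ) < C₀ ^ α := Real.rpow_pos_of_pos (by linarith) _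
  have hCK0 : (0:ℝ) < C₀ ^ (K + 1/3) := Real.rpow_pos_of_pos (by linarith) _
  have h4 : s ≤ C₁ * (C₀ ^ α * ψ s) :=
    le_trans hB1 (le_mul_of_one_le_left (mul_nonneg hCα0.le hψs0) hC₁)
  have h3 : K * C₁ * ψ (δ x) ≤ K * C₁ * (C₀ ^ (K + 1/3) * ψ s) :=
    mul_le_mul_of_nonneg_left hB2 (by positivity)
  linarith [hlt, h4, h3]
end

section
/- (Lemma 2.2) Let X be a quasimetric space with constant K ≥ 1, Ω ⊊ X a domain, φ admissible with constants r₀, C₀, and α > 0. Let ζ ∈ ∂Ω and x₀ ∈ Γ_{φ,ρ}(ζ,α) with 0 < ρ ≤ ρ̂₀. Then B_K(x₀) := B_K(x₀, δ_K(x₀)/(3K)) ⊆ Γ_{φ,ρ'}(ζ, α'), where ρ' = (K + 1/3)ρ and α' = (3αK/2)·C₀^(K+1/3). -/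
private lemma aux_le_two_rpow (x : ℝ) (hx : 0 ≤ x) : x ≤ 2 ^ (x + 1) := by
  have hl : (0.6931 : ℝ) < Real.log 2 := by
    have := Real.log_two_gt_d9; linarith
  have hy : 0 ≤ (x + 1) * Real.log 2 := by positivity
  have h2 : (2 : ℝ) ^ (x + 1) = Real.exp ((x + 1) * Real.log 2) := by
    rw [Real.rpow_def_of_pos two_pos]; ring_nf
  have h3 : Real.exp ((x + 1) * Real.log 2) =
      Real.exp ((x + 1) * Real.log 2 / 2) ^ 2 := by
    rw [sq, ← Real.exp_add]; ring_nf
  have h4 : 1 + (x + 1) * Real.log 2 / 2 ≤ Real.exp ((x + 1) * Real.log 2 / 2) := by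
    have := Real.add_one_le_exp ((x + 1) * Real.log 2 / 2); linarith
  have h5 : (0:ℝ) ≤ 1 + (x + 1) * Real.log 2 / 2 := by linarith
  have h6 : (1 + (x + 1) * Real.log 2 / 2) ^ 2 ≤
      Real.exp ((x + 1) * Real.log 2 / 2) ^ 2 := by
    apply pow_le_pow_left₀ h5 h4
  rw [h2, h3]
  nlinarith [sq_nonneg (x - 1), sq_nonneg (Real.log 2 - 0.6931), sq_nonneg x]

private lemma aux_iter_doub (φ : ℝ → ℝ) (C₀ r₀ : ℝ) (hC₀ : 1 ≤ C₀) (hr₀ : 0 < r₀)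
    (hφ_nonneg : ∀ t, 0 ≤ t → 0 ≤ φ t)
    (hφ_doub : ∀ t, 0 ≤ t → t ≤ r₀ → φ (2 * t) ≤ C₀ * φ t) :
    ∀ (m : ℕ) (u : ℝ), 0 ≤ u → 2 ^ m * u ≤ 2 * r₀ → φ (2 ^ m * u) ≤ C₀ ^ m * φ u := by
  intro m
  induction m with
  | zero => intro u hu _; simp
  | succ m ih =>
    intro u hu hle
    have hpow : (0:ℝ) < 2 ^ m := by positivity
    have hstep : (2:ℝ) ^ (m + 1) * u = 2 * (2 ^ m * u) := by ring
    have h2 : (2:ℝ) ^ m * u ≤ r₀ := by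
      rw [hstep] at hle; linarith
    have h2' : (2:ℝ) ^ m * u ≤ 2 * r₀ := by linarith
    have hCpos : (0:ℝ) < C₀ := by linarith
    calc φ (2 ^ (m + 1) * u) = φ (2 * (2 ^ m * u)) := by rw [hstep]
      _ ≤ C₀ * φ (2 ^ m * u) := hφ_doub _ (by positivity) h2
      _ ≤ C₀ * (C₀ ^ m * φ u) :=
          mul_le_mul_of_nonneg_left (ih u hu h2') hCpos.le
      _ = C₀ ^ (m + 1) * φ u := by ring

set_option maxHeartbeats 1000000 in
/-- Lemma 2.2: `B_K(x₀) ⊆ Γ_{φ,ρ'}(ζ, α')` with `ρ' = (K + 1/3)ρ`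
and `α' = (3αK/2)·C₀^(K+1/3)`. -/
theorem stmt_6 {X : Type*} [TopologicalSpace X]
    (K : ℝ) (hK : 1 ≤ K)
    (d : X → X → ℝ)
    (hd_nonneg : ∀ x y, 0 ≤ d x y)
    (hd_symm : ∀ x y, d x y = d y x)
    (hd_eq : ∀ x y, d x y = 0 ↔ x = y)
    (hd_tri : ∀ x y z, d x y ≤ K * (d x z + d z y))
    (Ω : Set X) (hΩopen : IsOpen Ω) (hΩconn : IsConnected Ω) (hΩne : Ω ≠ Set.univ)
    (δ : X → ℝ) (hδ : ∀ x, δ x = sInf ((d x) '' Ωᶜ))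
    (φ ψ : ℝ → ℝ) (C₀ r₀ ρ₀ : ℝ) (hC₀ : 1 ≤ C₀) (hr₀ : 0 < r₀) (hρ₀ : 0 < ρ₀)
    (hφ_nonneg : ∀ t, 0 ≤ t → 0 ≤ φ t)
    (hφ_mono : StrictMonoOn φ (Set.Ici 0))
    (hφ_surj : Set.SurjOn φ (Set.Ici 0) (Set.Ici 0))
    (hψ_maps : Set.MapsTo ψ (Set.Ici 0) (Set.Ici 0))
    (hψ_inv : Set.InvOn ψ φ (Set.Ici 0) (Set.Ici 0))
    (hφ_doub : ∀ t, 0 ≤ t → t ≤ r₀ → φ (2 * t) ≤ C₀ * φ t)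
    (hψ_doub : ∀ s, 0 ≤ s → s ≤ r₀ → ψ (2 * s) ≤ C₀ * ψ s)
    (α : ℝ) (hα : 0 < α)
    (ρ : ℝ) (hρpos : 0 < ρ)
    (hρ : ρ ≤ min (min (min (r₀ / 2 ^ (K + 1/3)) (r₀ / 2 ^ (α + 1)))
        (min (r₀ / (2 ^ ((3 * α * K / 2) * C₀ ^ (K + 1/3) + 1) * (K + 1/3)))
          ((1 / 2 ^ (α + 1)) * φ (r₀ / 2 ^ (K + 1/3))))) ρ₀)
    (ζ : X) (hζ : ζ ∈ frontier Ω)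
    (x₀ : X) (hx₀Ω : x₀ ∈ Ω) (hx₀Γ : φ (d x₀ ζ) < α * δ x₀) (hx₀ρ : δ x₀ < ρ)
    (x : X) (hx : d x₀ x < δ x₀ / (3 * K)) :
    x ∈ Ω ∧ φ (d x ζ) < ((3 * α * K / 2) * C₀ ^ (K + 1/3)) * δ x ∧ δ x < (K + 1/3) * ρ := by
  have hKpos : (0:ℝ) < K := by linarith
  have hcne : Ωᶜ.Nonempty := Set.nonempty_compl.mpr hΩne
  have hbdd : ∀ y : X, BddBelow ((d y) '' Ωᶜ) := by
    intro y
    exact ⟨0, by rintro _ ⟨w, _, rfl⟩; exact hd_nonneg y w⟩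
  have hδ_le : ∀ y z : X, z ∈ Ωᶜ → δ y ≤ d y z := by
    intro y z hz
    rw [hδ y]
    exact csInf_le (hbdd y) ⟨z, hz, rfl⟩
  have hδ_tri : ∀ a b : X, δ a ≤ K * d a b + K * δ b := by
    intro a b
    have hb : (δ a - K * d a b) / K ≤ δ b := by
      rw [hδ b]
      refine le_csInf (hcne.image _) ?_
      rintro _ ⟨z, hz, rfl⟩
      have h1 : δ a ≤ d a z := hδ_le a z hz
      have h2 : d a z ≤ K * (d a b + d b z) := hd_tri a z b
      rw [div_le_iff₀ hKpos]
      nlinarith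
    rw [div_le_iff₀ hKpos] at hb
    nlinarith
  -- positivity of δ x₀
  have hδx₀pos : 0 < δ x₀ := by
    have := hφ_nonneg (d x₀ ζ) (hd_nonneg x₀ ζ)
    nlinarith
  have hdx' : K * d x₀ x < δ x₀ / 3 := by
    have := mul_lt_mul_of_pos_left hx hKpos
    have h3K : K * (δ x₀ / (3 * K)) = δ x₀ / 3 := by field_simp
    linarith [h3K ▸ this]
  -- lower bound for δ x
  have h1 : δ x₀ ≤ K * d x₀ x + K * δ x := hδ_tri x₀ x
  have hδx_lb : δ x₀ < 3 * K / 2 * δ x := by nlinarith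
  have hδxpos : 0 < δ x := by nlinarith
  have hxΩ : x ∈ Ω := by
    by_contra h
    have h0 : δ x ≤ d x x := hδ_le x x h
    rw [(hd_eq x x).mpr rfl] at h0
    linarith
  -- third claim
  have h3 : δ x < (K + 1/3) * ρ := by
    have h2 : δ x ≤ K * d x x₀ + K * δ x₀ := hδ_tri x x₀
    rw [hd_symm x x₀] at h2
    nlinarith
  refine ⟨hxΩ, ?_, h3⟩
  -- main claim
  have hζc : ζ ∈ Ωᶜ := fun hmem => hζ.2 (by rwa [hΩopen.interior_eq])
  have hu : δ x₀ ≤ d x₀ ζ := hδ_le x₀ ζ hζc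
  have hu0 : 0 ≤ d x₀ ζ := hd_nonneg x₀ ζ
  -- ρ bounds
  have hρ1 : ρ ≤ r₀ / 2 ^ (K + 1/3) :=
    hρ.trans ((min_le_left _ _).trans ((min_le_left _ _).trans (min_le_left _ _)))
  have hρ4 : ρ ≤ (1 / 2 ^ (α + 1)) * φ (r₀ / 2 ^ (K + 1/3)) :=
    hρ.trans ((min_le_left _ _).trans ((min_le_right _ _).trans (min_le_right _ _)))
  have h2spos : (0:ℝ) < 2 ^ (K + 1/3) := Real.rpow_pos_of_pos two_pos _
  have hrpos : (0:ℝ) < r₀ / 2 ^ (K + 1/3) := by positivity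
  have hφr : 0 ≤ φ (r₀ / 2 ^ (K + 1/3)) := hφ_nonneg _ hrpos.le
  have hαle : α ≤ 2 ^ (α + 1) := aux_le_two_rpow α hα.le
  have h2apos : (0:ℝ) < 2 ^ (α + 1) := Real.rpow_pos_of_pos two_pos _
  have hchain : φ (d x₀ ζ) < φ (r₀ / 2 ^ (K + 1/3)) := by
    have hd1 : α / 2 ^ (α + 1) ≤ 1 := (div_le_one h2apos).mpr hαle
    have h5 : α * ρ ≤ α * ((1 / 2 ^ (α + 1)) * φ (r₀ / 2 ^ (K + 1/3))) :=
      mul_le_mul_of_nonneg_left hρ4 hα.le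
    have h6 : α * ((1 / 2 ^ (α + 1)) * φ (r₀ / 2 ^ (K + 1/3))) =
        (α / 2 ^ (α + 1)) * φ (r₀ / 2 ^ (K + 1/3)) := by ring
    nlinarith [mul_le_mul_of_nonneg_right hd1 hφr, mul_lt_mul_of_pos_left hx₀ρ hα]
  have hulr : d x₀ ζ < r₀ / 2 ^ (K + 1/3) := by
    by_contra h
    push_neg at h
    have := hφ_mono.monotoneOn (Set.mem_Ici.mpr hrpos.le) (Set.mem_Ici.mpr hu0) h
    linarith
  -- the natural number n
  set n : ℕ := ⌈Real.logb 2 (K + 1/3)⌉₊ with hn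
  have hs1 : (1:ℝ) < K + 1/3 := by linarith
  have hA : K + 1/3 ≤ (2:ℝ) ^ n := by
    have h0 : Real.logb 2 (K + 1/3) ≤ (n : ℝ) := Nat.le_ceil _
    have heq : (2:ℝ) ^ Real.logb 2 (K + 1/3) = K + 1/3 :=
      Real.rpow_logb two_pos (by norm_num) (by linarith)
    calc K + 1/3 = (2:ℝ) ^ Real.logb 2 (K + 1/3) := heq.symm
      _ ≤ (2:ℝ) ^ (n : ℝ) := Real.rpow_le_rpow_of_exponent_le one_le_two h0
      _ = (2:ℝ) ^ n := Real.rpow_natCast 2 n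
  have hB : (n : ℝ) ≤ K + 1/3 := by
    rcases le_or_gt n 1 with hle | hlt
    · have : (n:ℝ) ≤ 1 := by exact_mod_cast hle
      linarith
    · have hm : n - 1 < n := by omega
      have hcast : ((n - 1 : ℕ) : ℝ) < Real.logb 2 (K + 1/3) := Nat.lt_ceil.mp hm
      have hlt2 : (2:ℝ) ^ ((n - 1 : ℕ) : ℝ) < K + 1/3 := by
        calc (2:ℝ) ^ ((n - 1 : ℕ) : ℝ) < (2:ℝ) ^ Real.logb 2 (K + 1/3) :=
              Real.rpow_lt_rpow_of_exponent_lt one_lt_two hcast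
          _ = K + 1/3 := Real.rpow_logb two_pos (by norm_num) (by linarith)
      have hnle : (n : ℕ) ≤ 2 ^ (n - 1) := by
        have := Nat.lt_two_pow_self (n := n - 1)
        omega
      have : (n : ℝ) ≤ (2:ℝ) ^ (n - 1 : ℕ) := by exact_mod_cast hnle
      rw [← Real.rpow_natCast 2 (n - 1)] at this
      linarith
  have hn1 : 1 ≤ n := by
    by_contra h
    push_neg at h
    interval_cases n
    · simp at hA; linarith
  clear_value n
  obtain ⟨m, rfl⟩ : ∃ m, n = m + 1 := ⟨n - 1, (Nat.succ_pred_eq_of_pos hn1).symm⟩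
  -- bound on the doubling argument
  have hur : (2:ℝ) ^ (m + 1) * d x₀ ζ ≤ 2 * r₀ := by
    have e1 : ((m : ℕ) : ℝ) ≤ K + 1/3 := by
      have : ((m : ℕ) : ℝ) ≤ ((m + 1 : ℕ) : ℝ) := by exact_mod_cast Nat.le_succ m
      linarith
    have e2 : (2:ℝ) ^ (m : ℕ) ≤ (2:ℝ) ^ (K + 1/3) := by
      rw [← Real.rpow_natCast 2 m]
      exact Real.rpow_le_rpow_of_exponent_le one_le_two e1
    have e3 : (2:ℝ) ^ (m : ℕ) * d x₀ ζ ≤ (2:ℝ) ^ (K + 1/3) * d x₀ ζ :=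
      mul_le_mul_of_nonneg_right e2 hu0
    have e4 : (2:ℝ) ^ (K + 1/3) * d x₀ ζ ≤ (2:ℝ) ^ (K + 1/3) * (r₀ / 2 ^ (K + 1/3)) :=
      mul_le_mul_of_nonneg_left hulr.le h2spos.le
    have e5 : (2:ℝ) ^ (K + 1/3) * (r₀ / 2 ^ (K + 1/3)) = r₀ := by field_simp
    have e6 : (2:ℝ) ^ (m + 1) * d x₀ ζ = 2 * ((2:ℝ) ^ m * d x₀ ζ) := by ring
    rw [e6]; linarith
  -- main chain
  have hdxζ : d x ζ ≤ (K + 1/3) * d x₀ ζ := by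
    have t1 : d x ζ ≤ K * (d x x₀ + d x₀ ζ) := hd_tri x ζ x₀
    rw [hd_symm x x₀] at t1
    have t2 : K * (d x₀ x + d x₀ ζ) = K * d x₀ x + K * d x₀ ζ := by ring
    have t3 : (K + 1/3) * d x₀ ζ = K * d x₀ ζ + d x₀ ζ / 3 := by ring
    linarith
  have hd2 : (K + 1/3) * d x₀ ζ ≤ (2:ℝ) ^ (m + 1) * d x₀ ζ :=
    mul_le_mul_of_nonneg_right hA hu0
  have hmono : φ (d x ζ) ≤ φ ((2:ℝ) ^ (m + 1) * d x₀ ζ) := by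
    apply hφ_mono.monotoneOn (Set.mem_Ici.mpr (hd_nonneg x ζ))
      (Set.mem_Ici.mpr (by positivity)) (hdxζ.trans hd2)
  have hiter : φ ((2:ℝ) ^ (m + 1) * d x₀ ζ) ≤ C₀ ^ (m + 1) * φ (d x₀ ζ) :=
    aux_iter_doub φ C₀ r₀ hC₀ hr₀ hφ_nonneg hφ_doub (m + 1) (d x₀ ζ) hu0 hur
  have hCn : (C₀:ℝ) ^ (m + 1) ≤ C₀ ^ (K + 1/3) := by
    rw [← Real.rpow_natCast C₀ (m + 1)]
    exact Real.rpow_le_rpow_of_exponent_le hC₀ hB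
  have hCpos : (0:ℝ) < C₀ ^ (K + 1/3) := Real.rpow_pos_of_pos (by linarith) _
  have hφu : 0 ≤ φ (d x₀ ζ) := hφ_nonneg _ hu0
  have hfinal : φ (d x ζ) ≤ C₀ ^ (K + 1/3) * φ (d x₀ ζ) := by
    have := mul_le_mul_of_nonneg_right hCn hφu
    linarith
  have hlast : C₀ ^ (K + 1/3) * φ (d x₀ ζ) < C₀ ^ (K + 1/3) * (α * (3 * K / 2 * δ x)) := by
    apply mul_lt_mul_of_pos_left _ hCpos
    nlinarith
  calc φ (d x ζ) ≤ C₀ ^ (K + 1/3) * φ (d x₀ ζ) := hfinal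
    _ < C₀ ^ (K + 1/3) * (α * (3 * K / 2 * δ x)) := hlast
    _ = ((3 * α * K / 2) * C₀ ^ (K + 1/3)) * δ x := by ring
end

section
/- (Lemma 2.3) Let X be a quasimetric space with constant K ≥ 1, Ω ⊊ X a domain, φ admissible with constants r₀, C₀, α > 0, and set α' = (3αK/2)C₀^(K+1/3), C₁' = C₀^(α'+1), ρ' = (K+1/3)ρ. Then for all x ∈ Ω_{ρ'} := {x ∈ Ω : δ_K(x) < ρ'} with 0 < ρ ≤ ρ̂₀, the dual approach set Γ̃_φ(x, α') := {ξ ∈ ∂Ω : x ∈ Γ_φ(ξ, α')} is contained in B_K(x, C₁' φ⁻¹(δ_K(x))). -/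
/-- Lemma 2.3: for `x ∈ Ω_{ρ'}` the dual approach set
`Γ̃_φ(x, α')` is contained in `B_K(x, C₁' φ⁻¹(δ_K(x)))`, where
`α' = (3αK/2)C₀^(K+1/3)` and `C₁' = C₀^(α'+1)`. -/
theorem stmt_7 {X : Type*} [TopologicalSpace X]
    (K : ℝ) (hK : 1 ≤ K)
    (d : X → X → ℝ)
    (hd_nonneg : ∀ x y, 0 ≤ d x y)
    (hd_symm : ∀ x y, d x y = d y x)
    (hd_eq : ∀ x y, d x y = 0 ↔ x = y)
    (hd_tri : ∀ x y z, d x y ≤ K * (d x z + d z y))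
    (Ω : Set X) (hΩopen : IsOpen Ω) (hΩconn : IsConnected Ω) (hΩne : Ω ≠ Set.univ)
    (δ : X → ℝ) (hδ : ∀ x, δ x = sInf ((d x) '' Ωᶜ))
    (φ ψ : ℝ → ℝ) (C₀ r₀ ρ₀ : ℝ) (hC₀ : 1 ≤ C₀) (hr₀ : 0 < r₀) (hρ₀ : 0 < ρ₀)
    (hφ_nonneg : ∀ t, 0 ≤ t → 0 ≤ φ t)
    (hφ_mono : StrictMonoOn φ (Set.Ici 0))
    (hφ_surj : Set.SurjOn φ (Set.Ici 0) (Set.Ici 0))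
    (hψ_maps : Set.MapsTo ψ (Set.Ici 0) (Set.Ici 0))
    (hψ_inv : Set.InvOn ψ φ (Set.Ici 0) (Set.Ici 0))
    (hφ_doub : ∀ t, 0 ≤ t → t ≤ r₀ → φ (2 * t) ≤ C₀ * φ t)
    (hψ_doub : ∀ s, 0 ≤ s → s ≤ r₀ → ψ (2 * s) ≤ C₀ * ψ s)
    (α : ℝ) (hα : 0 < α)
    (ρ : ℝ) (hρpos : 0 < ρ)
    (hρ : ρ ≤ min (min (min (r₀ / 2 ^ (K + 1/3)) (r₀ / 2 ^ (α + 1)))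
        (min (r₀ / (2 ^ ((3 * α * K / 2) * C₀ ^ (K + 1/3) + 1) * (K + 1/3)))
          ((1 / 2 ^ (α + 1)) * φ (r₀ / 2 ^ (K + 1/3))))) ρ₀)
    (x : X) (hxΩ : x ∈ Ω) (hxρ' : δ x < (K + 1/3) * ρ) :
    {ξ ∈ frontier Ω | φ (d x ξ) < ((3 * α * K / 2) * C₀ ^ (K + 1/3)) * δ x} ⊆
      {ξ | d x ξ < C₀ ^ ((3 * α * K / 2) * C₀ ^ (K + 1/3) + 1) * ψ (δ x)} := by
  intro ξ hξ
  obtain ⟨hξf, hφd⟩ := hξ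
  set A : ℝ := (3 * α * K / 2) * C₀ ^ (K + 1/3) with hA
  have hC₀pos : (0:ℝ) < C₀ := lt_of_lt_of_le one_pos hC₀
  have hCKpos : (0:ℝ) < C₀ ^ (K + 1/3) := Real.rpow_pos_of_pos hC₀pos _
  have hKpos : (0:ℝ) < K := lt_of_lt_of_le one_pos hK
  have hApos : 0 < A := by
    apply mul_pos _ hCKpos
    positivity
  have hφd0 : 0 ≤ φ (d x ξ) := hφ_nonneg _ (hd_nonneg x ξ)
  have hδpos : 0 < δ x := by nlinarith
  -- ψ facts
  have hψ_mem : ∀ s, 0 ≤ s → 0 ≤ ψ s := fun s hs => hψ_maps hs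
  have hφψ : ∀ s, 0 ≤ s → φ (ψ s) = s := fun s hs => hψ_inv.2 hs
  have hψφ : ∀ s, 0 ≤ s → ψ (φ s) = s := fun s hs => hψ_inv.1 hs
  have hψ_mono : ∀ s t : ℝ, 0 ≤ s → s ≤ t → ψ s ≤ ψ t := by
    intro s t hs hst
    by_contra h
    push_neg at h
    have := hφ_mono (hψ_mem t (hs.trans hst)) (hψ_mem s hs) h
    rw [hφψ s hs, hφψ t (hs.trans hst)] at this
    linarith
  have hψ_smono : ∀ s t : ℝ, 0 ≤ s → s < t → ψ s < ψ t := by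
    intro s t hs hst
    by_contra h
    push_neg at h
    rcases eq_or_lt_of_le h with h3 | h3
    · have : φ (ψ t) = φ (ψ s) := by rw [h3]
      rw [hφψ s hs, hφψ t (hs.trans hst.le)] at this
      linarith
    · have := hφ_mono (hψ_mem t (hs.trans hst.le)) (hψ_mem s hs) h3
      rw [hφψ s hs, hφψ t (hs.trans hst.le)] at this
      linarith
  -- choose n
  set n : ℕ := ⌈A⌉₊ with hn
  have hnA : A ≤ (n:ℝ) := Nat.le_ceil A
  have hn1 : (n:ℝ) ≤ A + 1 := le_of_lt (Nat.ceil_lt_add_one hApos.le)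
  have h2n : A ≤ (2:ℝ) ^ n := by
    refine hnA.trans ?_
    exact_mod_cast (Nat.lt_two_pow_self (n := n)).le
  -- bound on δ x
  have hK3 : (0:ℝ) < K + 1/3 := by linarith
  have h2A1 : (0:ℝ) < (2:ℝ) ^ (A + 1) := Real.rpow_pos_of_pos two_pos _
  have hρc : ρ ≤ r₀ / (2 ^ (A + 1) * (K + 1/3)) :=
    hρ.trans ((min_le_left _ _).trans ((min_le_right _ _).trans (min_le_left _ _)))
  have hδr : δ x < r₀ / (2:ℝ) ^ (A + 1) := by
    have h1 : (K + 1/3) * ρ ≤ r₀ / 2 ^ (A + 1) := by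
      rw [div_mul_eq_div_div] at hρc
      calc (K + 1/3) * ρ ≤ (K + 1/3) * (r₀ / 2 ^ (A + 1) / (K + 1/3)) :=
            mul_le_mul_of_nonneg_left hρc hK3.le
        _ = r₀ / 2 ^ (A + 1) := by field_simp
    linarith
  -- doubling chain
  have key : ∀ k : ℕ, (2:ℝ) ^ k * δ x ≤ 2 * r₀ → ψ ((2:ℝ) ^ k * δ x) ≤ C₀ ^ k * ψ (δ x) := by
    intro k
    induction k with
    | zero => intro _; simp
    | succ k ih =>
      intro hk
      have hpow : (2:ℝ) ^ (k + 1) * δ x = 2 * ((2:ℝ) ^ k * δ x) := by ring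
      have h2k : (0:ℝ) ≤ 2 ^ k * δ x := by positivity
      have hle : (2:ℝ) ^ k * δ x ≤ r₀ := by
        rw [hpow] at hk; linarith
      calc ψ ((2:ℝ) ^ (k + 1) * δ x) = ψ (2 * ((2:ℝ) ^ k * δ x)) := by rw [hpow]
        _ ≤ C₀ * ψ ((2:ℝ) ^ k * δ x) := hψ_doub _ h2k hle
        _ ≤ C₀ * (C₀ ^ k * ψ (δ x)) := by
            refine mul_le_mul_of_nonneg_left (ih ?_) hC₀pos.le
            linarith
        _ = C₀ ^ (k + 1) * ψ (δ x) := by ring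
  -- apply chain at n
  have h2nr : (2:ℝ) ^ n * δ x ≤ 2 * r₀ := by
    have hle2 : (2:ℝ) ^ (n:ℝ) ≤ (2:ℝ) ^ (A + 1) :=
      Real.rpow_le_rpow_of_exponent_le one_le_two hn1
    have hcast : (2:ℝ) ^ n = (2:ℝ) ^ (n:ℝ) := (Real.rpow_natCast 2 n).symm
    have hδr' : (2:ℝ) ^ (A + 1) * δ x < r₀ := by
      rw [lt_div_iff₀ h2A1] at hδr; linarith [hδr]
    calc (2:ℝ) ^ n * δ x ≤ (2:ℝ) ^ (A + 1) * δ x := by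
          rw [hcast]; exact mul_le_mul_of_nonneg_right hle2 hδpos.le
      _ ≤ r₀ := hδr'.le
      _ ≤ 2 * r₀ := by linarith
  have hCn : C₀ ^ n ≤ C₀ ^ (A + 1) := by
    have : C₀ ^ n = C₀ ^ (n:ℝ) := (Real.rpow_natCast C₀ n).symm
    rw [this]
    exact Real.rpow_le_rpow_of_exponent_le hC₀ hn1
  have hψδ0 : 0 ≤ ψ (δ x) := hψ_mem _ hδpos.le
  have hfinal : d x ξ < C₀ ^ (A + 1) * ψ (δ x) := by
    calc d x ξ = ψ (φ (d x ξ)) := (hψφ _ (hd_nonneg x ξ)).symm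
      _ < ψ (A * δ x) := hψ_smono _ _ hφd0 hφd
      _ ≤ ψ ((2:ℝ) ^ n * δ x) :=
          hψ_mono _ _ (mul_nonneg hApos.le hδpos.le)
            (mul_le_mul_of_nonneg_right h2n hδpos.le)
      _ ≤ C₀ ^ n * ψ (δ x) := key n h2nr
      _ ≤ C₀ ^ (A + 1) * ψ (δ x) := mul_le_mul_of_nonneg_right hCn hψδ0
  exact hfinal
end

section
/- (Main Theorem 2.5) Let X be a locally uniformly homogeneous space satisfying the σ-finiteness condition (1), with d_K separately continuous and Borel. Let φ be admissible with constants r₀, C₀, and let α > 0, γ ∈ ℝ, d > 0, C₄ > 0. Let u : X → [0,∞) be K₁-quasinearly subharmonic with parameter ε₀ ∈ (0,1). Then there is a constant C = C(α,γ,ε₀,d,A,C₀,C₄,K,K₁) such that for every component X₁ of X, every domain Ω ⊊ X₁ whose boundary ∂Ω is Ahlfors-regular from above with dimension d and constant C₄, and every 0 < ρ ≤ ρ̂₀: ∫_{∂Ω} sup_{x ∈ Γ_{φ,ρ}(ζ,α)} { δ_K(x)^γ μ(B_K(x)) [φ⁻¹(δ_K(x))]^{−d} u(x) } dH_K^d(ζ)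 ≤ C ∫_{Ω_{ρ'}} δ_K(x)^γ u(x) dμ(x), where ρ' = (K+1/3)ρ and sup over the empty set is 0. Explicitly one may take C = (3K/2)^{|γ|} K₁ A^{1−log₂ε₀} C₀^{d(K+1/3)} [1 + C₄(C₁'C₂'C₃')^d] with C₁' = C₀^{(3αK/2)C₀^{K+1/3}+1}, C₂' = C₀^α/3 + K C₀^{K+1/3}, C₃' = K(1 + C₀^{α+1}/(C₁'C₂')). -/
open MeasureTheory
open scoped ENNReal

lemma stmt13_le_two_rpow (y : ℝ) : y ≤ 2 ^ y := by
  rcases le_or_gt y 0 with hy | hy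
  · exact hy.trans (Real.rpow_pos_of_pos two_pos y).le
  · have h1 : (2:ℝ) ^ (y/2) = Real.exp ((y/2) * Real.log 2) := by
      rw [Real.rpow_def_of_pos two_pos]; ring_nf
    have h2 : (y/2) * Real.log 2 + 1 ≤ Real.exp ((y/2) * Real.log 2) :=
      Real.add_one_le_exp _
    have h3 : (2:ℝ) ^ y = ((2:ℝ) ^ (y/2)) ^ (2:ℕ) := by
      rw [← Real.rpow_natCast ((2:ℝ) ^ (y/2)) 2, ← Real.rpow_mul (by norm_num)]
      norm_num
    have hl := Real.log_two_gt_d9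
    have hpos : (0:ℝ) ≤ (y/2) * Real.log 2 + 1 := by nlinarith
    have h4 : ((y/2) * Real.log 2 + 1) ^ (2:ℕ) ≤ ((2:ℝ) ^ (y/2)) ^ (2:ℕ) := by
      apply pow_le_pow_left₀ hpos (by rw [h1]; linarith)
    rw [h3]
    nlinarith [sq_nonneg (Real.log 2 * Real.log 2 * y - 2*(1 - Real.log 2))]

lemma stmt13_logb_le_self {x : ℝ} (hx : 0 < x) : Real.logb 2 x ≤ x := by
  have h := stmt13_le_two_rpow (Real.logb 2 x)
  by_contra hc
  push_neg at hc
  have h2 := Real.rpow_lt_rpow_of_exponent_lt (by norm_num : (1:ℝ) < 2) hc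
  rw [Real.rpow_logb two_pos (by norm_num) hx] at h2
  have hx2 := stmt13_le_two_rpow x
  linarith

lemma stmt13_logb_le_sub_one {c : ℝ} (hc : 2 ≤ c) : Real.logb 2 c ≤ c - 1 := by
  have hl := Real.log_two_gt_d9
  have hlog : Real.log c ≤ Real.log 2 + (c/2 - 1) := by
    have h1 : Real.log c = Real.log 2 + Real.log (c/2) := by
      rw [← Real.log_mul (by norm_num) (by positivity)]
      congr 1; ring
    have h2 : Real.log (c/2) ≤ c/2 - 1 := Real.log_le_sub_one_of_pos (by linarith)
    linarith
  rw [Real.logb, div_le_iff₀ (by linarith : (0:ℝ) < Real.log 2)]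
  nlinarith

lemma stmt13_two_rpow_ge (K : ℝ) (hK : 1 ≤ K) : (7:ℝ)/3 ≤ 2 ^ (K + 1/3) := by
  have h1 : (2:ℝ) ^ ((4:ℝ)/3) ≤ 2 ^ (K + 1/3) :=
    Real.rpow_le_rpow_of_exponent_le (by norm_num) (by linarith)
  have h2 : ((7:ℝ)/3) ^ (3:ℕ) ≤ ((2:ℝ) ^ ((4:ℝ)/3)) ^ (3:ℕ) := by
    have e : ((2:ℝ) ^ ((4:ℝ)/3)) ^ (3:ℕ) = 16 := by
      rw [← Real.rpow_natCast ((2:ℝ) ^ ((4:ℝ)/3)) 3, ← Real.rpow_mul (by norm_num)]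
      rw [show ((4:ℝ)/3 * ((3:ℕ):ℝ)) = ((4:ℕ):ℝ) by push_cast; ring, Real.rpow_natCast]
      norm_num
    rw [e]; norm_num
  have h3 : (7:ℝ)/3 ≤ (2:ℝ) ^ ((4:ℝ)/3) := by
    refine le_of_pow_le_pow_left₀ (by norm_num) (by positivity) h2
  linarith

lemma stmt13_measurable_rpow_const {X : Type*} [MeasurableSpace X] {g : X → ℝ}
    (hg : Measurable g) (hg0 : ∀ x, 0 ≤ g x) (c : ℝ) : Measurable (fun x => g x ^ c) := by
  have heq : (fun x => g x ^ c) =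
      fun x => if g x = 0 then (if c = 0 then 1 else 0) else Real.exp (Real.log (g x) * c) := by
    funext x
    rcases eq_or_lt_of_le (hg0 x) with h | h
    · rw [← h]
      rcases eq_or_ne c 0 with rfl | hc
      · simp [Real.rpow_zero]
      · simp [Real.zero_rpow hc, hc]
    · rw [if_neg (ne_of_gt h), Real.rpow_def_of_pos h]
  rw [heq]
  exact Measurable.ite (hg (measurableSet_singleton 0)) measurable_const
    (((Real.measurable_log.comp hg).mul_const c).exp)

/-- The `d_K`-diameter of a set, valued in `ℝ≥0∞`. -/
noncomputable def qdiam {X : Type*} (d : X → X → ℝ) (A : Set X) : ℝ≥0∞ :=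
  ⨆ x ∈ A, ⨆ y ∈ A, ENNReal.ofReal (d x y)

/-- The `d`-dimensional Hausdorff outer measure built from the quasimetric `d_K`. -/
noncomputable def hausdorffQ {X : Type*} (d : X → X → ℝ) (dim : ℝ) (A : Set X) : ℝ≥0∞ :=
  ⨆ (δ : ℝ≥0∞) (_ : 0 < δ),
    ⨅ (c : ℕ → Set X) (_ : A ⊆ ⋃ n, c n) (_ : ∀ n, qdiam d (c n) ≤ δ),
      ∑' n, qdiam d (c n) ^ dim

set_option maxHeartbeats 2000000

/-- Main Theorem 2.5: the weighted boundary integral inequality for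
quasinearly subharmonic functions on a locally uniformly homogeneous space. -/
theorem stmt_13 {X : Type*} [TopologicalSpace X] [MeasurableSpace X] [BorelSpace X]
    (K : ℝ) (hK : 1 ≤ K)
    (d : X → X → ℝ)
    (hd_nonneg : ∀ x y, 0 ≤ d x y)
    (hd_symm : ∀ x y, d x y = d y x)
    (hd_eq : ∀ x y, d x y = 0 ↔ x = y)
    (hd_tri : ∀ x y z, d x y ≤ K * (d x z + d z y))
    (hbasis : ∀ x : X, (nhds x).HasBasis (fun r : ℝ => 0 < r) (fun r => {y | d x y < r}))
    (hcont₁ : ∀ x : X, Continuous (fun y => d x y))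
    (hcont₂ : ∀ y : X, Continuous (fun x => d x y))
    (hd_borel : Measurable (fun p : X × X => d p.1 p.2))
    (μ : Measure X)
    (hpos : ∀ x : X, ∀ r : ℝ, 0 < r → 0 < μ {y | d x y < r})
    (hfin : ∀ x : X, ∀ r : ℝ, 0 < r → μ {y | d x y < r} < ⊤)
    (A ρ₀ : ℝ) (hA : 1 ≤ A) (hρ₀ : 0 < ρ₀)
    (hdoub : ∀ x : X, ∀ r : ℝ, 0 < r → r ≤ ρ₀ →
      μ {y | d x y < r} ≤ ENNReal.ofReal A * μ {y | d x y < r / 2})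
    -- condition (1): countable covers by quasiballs of arbitrarily small diameter
    (hcover : ∀ ε : ℝ, 0 < ε → ∃ (c : ℕ → X) (r : ℕ → ℝ),
      (∀ x : X, ∃ n, d (c n) x < r n) ∧
      ∀ n, qdiam d {y | d (c n) y < r n} ≤ ENNReal.ofReal ε)
    (dd : ℝ) (hdd : 0 < dd)
    -- H is the d-dimensional Hausdorff measure built from d_K
    (H : Measure X) (hH : ∀ S : Set X, MeasurableSet S → H S = hausdorffQ d dd S)
    (φ ψ : ℝ → ℝ) (C₀ r₀ : ℝ) (hC₀ : 1 ≤ C₀) (hr₀ : 0 < r₀)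
    (hφ_nonneg : ∀ t, 0 ≤ t → 0 ≤ φ t)
    (hφ_mono : StrictMonoOn φ (Set.Ici 0))
    (hφ_surj : Set.SurjOn φ (Set.Ici 0) (Set.Ici 0))
    (hψ_maps : Set.MapsTo ψ (Set.Ici 0) (Set.Ici 0))
    (hψ_inv : Set.InvOn ψ φ (Set.Ici 0) (Set.Ici 0))
    (hφ_doub : ∀ t, 0 ≤ t → t ≤ r₀ → φ (2 * t) ≤ C₀ * φ t)
    (hψ_doub : ∀ s, 0 ≤ s → s ≤ r₀ → ψ (2 * s) ≤ C₀ * ψ s)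
    (α γ C₄ : ℝ) (hα : 0 < α) (hC₄ : 0 < C₄)
    (u : X → ℝ) (hu_nonneg : ∀ x, 0 ≤ u x) (hu_meas : Measurable u)
    (K₁ ε₀ : ℝ) (hK₁ : 1 ≤ K₁) (hε₀ : 0 < ε₀) (hε₀1 : ε₀ < 1)
    -- u is K₁-quasinearly subharmonic with parameter ε₀:
    (hqns : ∀ Ω' : Set X, IsOpen Ω' → Ω' ≠ Set.univ → ∀ x ∈ Ω', ∀ r : ℝ, 0 < r →
      r ≤ min ρ₀ (ε₀ * sInf ((d x) '' Ω'ᶜ)) →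
      (∫⁻ y in {y | d x y < r}, ENNReal.ofReal (u y) ∂μ) < ⊤ ∧
      ENNReal.ofReal (u x) * μ {y | d x y < r} ≤
        ENNReal.ofReal K₁ * ∫⁻ y in {y | d x y < r}, ENNReal.ofReal (u y) ∂μ) :
    -- conclusion, with the explicit constant C
    ∀ x₁ : X, ∀ Ω : Set X, Ω ⊆ connectedComponent x₁ → Ω ≠ connectedComponent x₁ →
      IsOpen Ω → IsConnected Ω →
      -- ∂Ω is Ahlfors-regular from above, with dimension dd and constant C₄:
      (∀ x ∈ frontier Ω, ∀ r : ℝ, 0 < r →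
        hausdorffQ d dd (frontier Ω ∩ {y | d x y < r}) ≤ ENNReal.ofReal (C₄ * r ^ dd)) →
      ∀ ρ : ℝ, 0 < ρ →
        ρ ≤ min (min (min (r₀ / 2 ^ (K + 1/3)) (r₀ / 2 ^ (α + 1)))
            (min (r₀ / (2 ^ ((3 * α * K / 2) * C₀ ^ (K + 1/3) + 1) * (K + 1/3)))
              ((1 / 2 ^ (α + 1)) * φ (r₀ / 2 ^ (K + 1/3))))) ρ₀ →
        (∫⁻ ζ in frontier Ω,
            ⨆ x ∈ {x | x ∈ Ω ∧ φ (d x ζ) < α * sInf ((d x) '' Ωᶜ) ∧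
                sInf ((d x) '' Ωᶜ) < ρ},
              ENNReal.ofReal ((sInf ((d x) '' Ωᶜ)) ^ γ *
                  (ψ (sInf ((d x) '' Ωᶜ))) ^ (-dd) * u x) *
                μ {y | d x y < sInf ((d x) '' Ωᶜ) / (3 * K)} ∂H) ≤
          ENNReal.ofReal ((3 * K / 2) ^ |γ| * K₁ * A ^ ((1 : ℝ) - Real.logb 2 ε₀) *
              C₀ ^ (dd * (K + 1/3)) *
              (1 + C₄ * ((C₀ ^ ((3 * α * K / 2) * C₀ ^ (K + 1/3) + 1)) *
                (C₀ ^ α / 3 + K * C₀ ^ (K + 1/3)) *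
                (K * (1 + C₀ ^ (α + 1) /
                  ((C₀ ^ ((3 * α * K / 2) * C₀ ^ (K + 1/3) + 1)) *
                    (C₀ ^ α / 3 + K * C₀ ^ (K + 1/3)))))) ^ dd)) *
            ∫⁻ x in {x | x ∈ Ω ∧ sInf ((d x) '' Ωᶜ) < (K + 1/3) * ρ},
              ENNReal.ofReal ((sInf ((d x) '' Ωᶜ)) ^ γ * u x) ∂μ := by
  intro x₁ Ω hΩsub hΩne hΩopen hΩconn hAhl ρ hρpos hρle
  have hKpos : (0:ℝ) < K := lt_of_lt_of_le one_pos hK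
  have hC₀pos : (0:ℝ) < C₀ := lt_of_lt_of_le one_pos hC₀
  -- abbreviation for the distance to the complement
  set D : X → ℝ := fun x => sInf ((d x) '' Ωᶜ) with hD
  set M : ℝ := (3 * α * K / 2) * C₀ ^ (K + 1/3) + 1 with hM
  set C₁ : ℝ := C₀ ^ M with hC₁
  set ρ' : ℝ := (K + 1/3) * ρ with hρ'
  set Rad : X → ℝ := fun y => (K + 1/3) * C₁ * ψ (D y) with hRad
  set cbig : ℝ := 2 * K * ((K + 1/3) * C₁) with hcbig
  set n₀ : ℕ := ⌈Real.logb 2 ε₀⁻¹⌉₊ with hn₀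
  set k' : ℕ := ⌈Real.logb 2 (K + 1/3)⌉₊ with hk'
  set m' : ℕ := ⌈Real.logb 2 (3*α*K/2)⌉₊ with hm'
  set cstar : ℝ := (3*K/2) ^ |γ| * ((C₀ ^ (k':ℕ)) ^ dd) * K₁ * A ^ (n₀:ℕ) with hcstar
  -- basic facts about Ω and D
  have hΩuniv : Ω ≠ Set.univ := by
    intro h
    exact hΩne (le_antisymm hΩsub (by rw [h]; exact Set.subset_univ _))
  have hcne : Ωᶜ.Nonempty := Set.nonempty_compl.mpr hΩuniv
  have himgne : ∀ x : X, ((d x) '' Ωᶜ).Nonempty := fun x => hcne.image _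
  have hbdd : ∀ x : X, BddBelow ((d x) '' Ωᶜ) := by
    intro x
    exact ⟨0, by rintro _ ⟨z, _, rfl⟩; exact hd_nonneg x z⟩
  have hD0 : ∀ x, 0 ≤ D x := by
    intro x
    exact le_csInf (himgne x) (by rintro _ ⟨z, _, rfl⟩; exact hd_nonneg x z)
  have hDle : ∀ x z, z ∈ Ωᶜ → D x ≤ d x z := fun x z hz =>
    csInf_le (hbdd x) ⟨z, hz, rfl⟩
  have hDtri : ∀ x y, D x ≤ K * (d x y + D y) := by
    intro x y
    have h1 : D x / K - d x y ≤ D y := by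
      refine le_csInf (himgne y) ?_
      rintro _ ⟨z, hz, rfl⟩
      have h2 := hd_tri x z y
      have h3 := hDle x z hz
      rw [div_sub' (ne_of_gt hKpos), div_le_iff₀ hKpos]
      nlinarith only [h2, h3, hKpos]
    rw [div_sub' (ne_of_gt hKpos), div_le_iff₀ hKpos] at h1
    nlinarith only [h1, hKpos]
  have hDpos : ∀ x ∈ Ω, 0 < D x := by
    intro x hx
    obtain ⟨r, hr, hball⟩ := (hbasis x).mem_iff.mp (hΩopen.mem_nhds hx)
    refine lt_of_lt_of_le hr (le_csInf (himgne x) ?_)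
    rintro _ ⟨z, hz, rfl⟩
    by_contra hlt
    push_neg at hlt
    exact hz (hball hlt)
  have hballΩ : ∀ x y, d x y < D x → y ∈ Ω := by
    intro x y hy
    by_contra hyc
    exact absurd (hDle x y hyc) (not_le.mpr hy)
  have hDmeas : Measurable D := by
    apply measurable_of_Iio
    intro a
    have : D ⁻¹' (Set.Iio a) = ⋃ z : {z // z ∈ Ωᶜ}, {x | d x (z:X) < a} := by
      ext x
      simp only [Set.mem_preimage, Set.mem_Iio, Set.mem_iUnion, Set.mem_setOf_eq]
      constructor
      · intro hx
        obtain ⟨_, ⟨z, hz, rfl⟩, hlt⟩ := (csInf_lt_iff (hbdd x) (himgne x)).mp hx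
        exact ⟨⟨z, hz⟩, hlt⟩
      · rintro ⟨⟨z, hz⟩, hlt⟩
        exact lt_of_le_of_lt (hDle x z hz) hlt
    rw [this]
    exact (isOpen_iUnion (fun z : {z // z ∈ Ωᶜ} => isOpen_lt (hcont₂ (z:X)) continuous_const)).measurableSet
  -- facts about φ and ψ
  have hφ0 : φ 0 = 0 := by
    obtain ⟨t, ht, h0⟩ := hφ_surj (Set.self_mem_Ici (a := (0:ℝ)))
    rcases eq_or_lt_of_le (Set.mem_Ici.mp ht : (0:ℝ) ≤ t) with h | h
    · rw [← h] at h0; exact h0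
    · have h1 := hφ_mono Set.self_mem_Ici (Set.mem_Ici.mpr ht) h
      have h2 := hφ_nonneg 0 le_rfl
      have h3 : φ 0 < 0 := h0 ▸ h1
      linarith only [h2, h3]
  have hφmono : MonotoneOn φ (Set.Ici 0) := hφ_mono.monotoneOn
  have hψmono : ∀ a b : ℝ, 0 ≤ a → a ≤ b → ψ a ≤ ψ b := by
    intro a b ha hab
    by_contra hc
    push_neg at hc
    have hb : (0:ℝ) ≤ b := ha.trans hab
    have h1 := hφ_mono (hψ_maps (Set.mem_Ici.mpr hb)) (hψ_maps (Set.mem_Ici.mpr ha)) hc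
    rw [hψ_inv.2 (Set.mem_Ici.mpr ha), hψ_inv.2 (Set.mem_Ici.mpr hb)] at h1
    exact absurd h1 (not_lt.mpr hab)
  have hψstrict : ∀ a b : ℝ, 0 ≤ a → a < b → ψ a < ψ b := by
    intro a b ha hab
    rcases lt_or_ge (ψ a) (ψ b) with h | h
    · exact h
    · have h1 := hφmono (hψ_maps (Set.mem_Ici.mpr (ha.trans hab.le))) (hψ_maps (Set.mem_Ici.mpr ha)) h
      rw [hψ_inv.2 (Set.mem_Ici.mpr ha), hψ_inv.2 (Set.mem_Ici.mpr (ha.trans hab.le))] at h1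
      exact absurd h1 (not_le.mpr hab)
  have hψ0 : ψ 0 = 0 := by
    have h1 : φ (ψ 0) = φ 0 := by
      rw [hψ_inv.2 (Set.self_mem_Ici), hφ0]
    exact hφ_mono.injOn (hψ_maps Set.self_mem_Ici) Set.self_mem_Ici h1
  have hψpos : ∀ s : ℝ, 0 < s → 0 < ψ s := by
    intro s hs
    have := hψstrict 0 s le_rfl hs
    rwa [hψ0] at this
  have hψnn : ∀ s : ℝ, 0 ≤ s → 0 ≤ ψ s := fun s hs => hψ_maps (Set.mem_Ici.mpr hs)
  have hC₀2 : 2 ≤ C₀ := by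
    by_contra hc
    push_neg at hc
    obtain ⟨t₁, ht₁, hval⟩ := hφ_surj (Set.mem_Ici.mpr hr₀.le)
    have ht₁pos : 0 < t₁ := by
      rcases eq_or_lt_of_le (Set.mem_Ici.mp ht₁ : (0:ℝ) ≤ t₁) with h | h
      · exfalso; rw [← h, hφ0] at hval; linarith only [hval, hr₀]
      · exact h
    set t := min t₁ r₀ with ht
    have htpos : 0 < t := lt_min ht₁pos hr₀
    have htr₀ : t ≤ r₀ := min_le_right _ _
    have hφt_le : φ t ≤ r₀ := by
      calc φ t ≤ φ t₁ := hφmono (Set.mem_Ici.mpr htpos.le) (Set.mem_Ici.mpr ht₁pos.le) (min_le_left _ _)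
        _ = r₀ := hval
    have hφt_pos : 0 < φ t := by
      have := hφ_mono Set.self_mem_Ici (Set.mem_Ici.mpr htpos.le) htpos
      rwa [hφ0] at this
    have h1 : ψ (2 * φ t) ≤ C₀ * t := by
      have := hψ_doub (φ t) hφt_pos.le hφt_le
      rwa [hψ_inv.1 (Set.mem_Ici.mpr htpos.le)] at this
    have h2 : 2 * φ t ≤ φ (C₀ * t) := by
      have h3 := hφmono (hψ_maps (Set.mem_Ici.mpr (by positivity : (0:ℝ) ≤ 2 * φ t)))
        (Set.mem_Ici.mpr (by positivity : (0:ℝ) ≤ C₀ * t)) h1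
      rwa [hψ_inv.2 (Set.mem_Ici.mpr (by positivity : (0:ℝ) ≤ 2 * φ t))] at h3
    have h4 : φ (C₀ * t) ≤ φ (2 * t) := by
      apply hφmono (Set.mem_Ici.mpr (by positivity)) (Set.mem_Ici.mpr (by positivity))
      exact mul_le_mul_of_nonneg_right hc.le htpos.le
    have h5 := hφ_doub t htpos.le htr₀
    have h6 := mul_lt_mul_of_pos_right hc hφt_pos
    linarith only [h2, h4, h5, h6]
  -- doubling chains
  have hψchain : ∀ n : ℕ, ∀ t : ℝ, 0 ≤ t → 2^n * t ≤ 2*r₀ → ψ (2^n * t) ≤ C₀^n * ψ t := by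
    intro n
    induction n with
    | zero => intro t ht _; simp
    | succ n ih =>
      intro t ht hbound
      have h2n : (0:ℝ) < 2^n := by positivity
      have hb1 : 2^n * t ≤ r₀ := by
        have he : (2:ℝ)^(n+1) * t = 2 * (2^n * t) := by ring
        rw [he] at hbound; linarith only [hbound]
      have h1 : ψ (2^(n+1) * t) = ψ (2 * (2^n * t)) := by ring_nf
      rw [h1]
      calc ψ (2 * (2^n * t)) ≤ C₀ * ψ (2^n * t) := hψ_doub _ (by positivity) hb1
        _ ≤ C₀ * (C₀^n * ψ t) := by
            have hle : 2^n * t ≤ 2 * r₀ := by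
              have he : (2:ℝ)^(n+1) * t = 2 * (2^n * t) := by ring
              have h2n : (0:ℝ) ≤ 2^n * t := by positivity
              rw [he] at hbound; linarith only [hbound, h2n]
            exact mul_le_mul_of_nonneg_left (ih t ht hle) hC₀pos.le
        _ = C₀^(n+1) * ψ t := by ring
  have hμchain : ∀ n : ℕ, ∀ x : X, ∀ r : ℝ, 0 < r → r ≤ ρ₀ →
      μ {y | d x y < r} ≤ (ENNReal.ofReal A)^n * μ {y | d x y < r / 2^n} := by
    intro n
    induction n with
    | zero => intro x r _ _; simp
    | succ n ih =>
      intro x r hr hrρ₀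
      calc μ {y | d x y < r} ≤ (ENNReal.ofReal A)^n * μ {y | d x y < r / 2^n} := ih x r hr hrρ₀
        _ ≤ (ENNReal.ofReal A)^n * (ENNReal.ofReal A * μ {y | d x y < r / 2^n / 2}) := by
            gcongr
            exact hdoub x _ (by positivity) (by
              calc r / 2^n ≤ r := by
                    apply div_le_self hr.le
                    exact one_le_pow₀ (by norm_num)
                _ ≤ ρ₀ := hrρ₀)
        _ = (ENNReal.ofReal A)^(n+1) * μ {y | d x y < r / 2^(n+1)} := by
            rw [show r / 2^n / 2 = r / 2^(n+1) by ring]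
            ring
  -- extraction of the ρ-constraints
  have hρρ₀ : ρ ≤ ρ₀ := hρle.trans (min_le_right _ _)
  have hρA := hρle.trans (min_le_left _ _)
  have hρ1 : ρ ≤ r₀ / 2 ^ (K + 1/3) := hρA.trans ((min_le_left _ _).trans (min_le_left _ _))
  have hρ3 : ρ ≤ r₀ / (2 ^ M * (K + 1/3)) :=
    hρA.trans ((min_le_right _ _).trans (min_le_left _ _))
  have hM1 : (1:ℝ) ≤ M := by
    rw [hM]
    have h1 : (0:ℝ) ≤ 3 * α * K / 2 * C₀ ^ (K + 1/3) := by positivity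
    linarith only [h1]
  have h2M : (1:ℝ) ≤ 2 ^ M := Real.one_le_rpow (by norm_num) (by linarith)
  have h2Mpos : (0:ℝ) < 2 ^ M := Real.rpow_pos_of_pos (by norm_num) _
  have hK13pos : (0:ℝ) < K + 1/3 := by linarith
  have hρ'pos : 0 < ρ' := by rw [hρ']; positivity
  have hρ'M : ρ' ≤ r₀ / 2 ^ M := by
    rw [hρ']
    rw [le_div_iff₀ (by positivity)] at hρ3 ⊢
    have h1 : ρ * (2 ^ M * (K + 1/3)) = (K + 1/3) * ρ * 2 ^ M := by ring
    rw [h1] at hρ3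
    linarith only [hρ3]
  have hρ'r₀ : ρ' ≤ r₀ := hρ'M.trans (div_le_self hr₀.le h2M)
  have h2K13 : (1:ℝ) ≤ 2 ^ (K + 1/3) := Real.one_le_rpow (by norm_num) (by linarith)
  have hρr₀ : ρ ≤ r₀ := hρ1.trans (div_le_self hr₀.le h2K13)
  have hKexp : K + 1/3 ≤ 2 ^ (K + 1/3) := stmt13_le_two_rpow _
  -- facts about n₀
  have hε₀inv1 : (1:ℝ) ≤ ε₀⁻¹ := by
    have h1 := mul_lt_mul_of_pos_right hε₀1 (inv_pos.mpr hε₀)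
    have h2 := mul_inv_cancel₀ (ne_of_gt hε₀)
    have h3 : (1:ℝ) * ε₀⁻¹ = ε₀⁻¹ := one_mul _
    linarith only [h1, h2, h3]
  have hlogbinv : 0 ≤ Real.logb 2 ε₀⁻¹ := Real.logb_nonneg one_lt_two hε₀inv1
  have h2n₀ : ε₀⁻¹ ≤ 2 ^ (n₀:ℕ) := by
    have h1 : Real.logb 2 ε₀⁻¹ ≤ (n₀:ℝ) := Nat.le_ceil _
    have h2 := Real.rpow_le_rpow_of_exponent_le (by norm_num : (1:ℝ) ≤ 2) h1
    rw [Real.rpow_logb two_pos (by norm_num) (inv_pos.mpr hε₀), Real.rpow_natCast] at h2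
    exact h2
  have hn₀le : (n₀:ℝ) ≤ 1 - Real.logb 2 ε₀ := by
    have h1 : (n₀:ℝ) < Real.logb 2 ε₀⁻¹ + 1 := Nat.ceil_lt_add_one hlogbinv
    rw [Real.logb_inv] at h1
    linarith only [h1]
  -- facts about k'
  have hlogbk : 0 ≤ Real.logb 2 (K + 1/3) := Real.logb_nonneg one_lt_two (by linarith)
  have hk1 : K + 1/3 ≤ 2 ^ (k':ℕ) := by
    have h1 : Real.logb 2 (K + 1/3) ≤ (k':ℝ) := Nat.le_ceil _
    have h2 := Real.rpow_le_rpow_of_exponent_le (by norm_num : (1:ℝ) ≤ 2) h1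
    rw [Real.rpow_logb two_pos (by norm_num) hK13pos, Real.rpow_natCast] at h2
    exact h2
  have hk2 : (2:ℝ) ^ (k':ℕ) ≤ 2 * (K + 1/3) := by
    have h1 : (k':ℝ) ≤ Real.logb 2 (K + 1/3) + 1 := (Nat.ceil_lt_add_one hlogbk).le
    have h2 := Real.rpow_le_rpow_of_exponent_le (by norm_num : (1:ℝ) ≤ 2) h1
    rw [Real.rpow_natCast] at h2
    refine h2.trans ?_
    rw [Real.rpow_add two_pos, Real.rpow_logb two_pos (by norm_num) hK13pos, Real.rpow_one]
    linarith only []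
  have hk3 : (k':ℝ) ≤ K + 1/3 := by
    rcases le_or_gt (K + 1/3) 2 with h | h
    · have h1 : Real.logb 2 (K + 1/3) ≤ 1 := by
        have h0 := Real.logb_le_logb_of_le one_lt_two hK13pos h
        rwa [Real.logb_self_eq_one one_lt_two] at h0
      have h2 : k' ≤ 1 := Nat.ceil_le.mpr (by exact_mod_cast h1)
      have h3 : (k':ℝ) ≤ 1 := by exact_mod_cast h2
      linarith only [h3, hK]
    · have h1 : (k':ℝ) < Real.logb 2 (K + 1/3) + 1 := Nat.ceil_lt_add_one hlogbk
      have h2 := stmt13_logb_le_sub_one h.le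
      linarith only [h1, h2]
  -- facts about m'
  have hm1 : 3*α*K/2 ≤ 2 ^ (m':ℕ) := by
    rcases le_or_gt (3*α*K/2) 1 with h | h
    · exact h.trans (one_le_pow₀ (by norm_num))
    · have h1 : Real.logb 2 (3*α*K/2) ≤ (m':ℝ) := Nat.le_ceil _
      have h2 := Real.rpow_le_rpow_of_exponent_le (by norm_num : (1:ℝ) ≤ 2) h1
      rw [Real.rpow_logb two_pos (by norm_num) (by linarith), Real.rpow_natCast] at h2
      exact h2
  have hC₀K13 : (1:ℝ) ≤ C₀ ^ (K + 1/3) := Real.one_le_rpow hC₀ (by linarith)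
  have hm3 : (m':ℝ) ≤ M := by
    rcases le_or_gt (3*α*K/2) 1 with h | h
    · have h1 : m' = 0 := Nat.ceil_eq_zero.mpr (Real.logb_nonpos one_lt_two (by positivity) h)
      rw [h1]; simpa using hM1.trans' (by norm_num)
    · have h1 : (m':ℝ) < Real.logb 2 (3*α*K/2) + 1 :=
        Nat.ceil_lt_add_one (Real.logb_nonneg one_lt_two h.le)
      have h2 := stmt13_logb_le_self (by linarith only [h] : (0:ℝ) < 3*α*K/2)
      rw [hM]
      have h3 : 3*α*K/2 ≤ 3*α*K/2 * C₀ ^ (K + 1/3) :=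
        le_mul_of_one_le_right (by positivity) hC₀K13
      linarith only [h1, h2, h3]
  have hm2 : (2:ℝ) ^ (m':ℕ) * ρ' ≤ 2 * r₀ := by
    rcases le_or_gt (3*α*K/2) 1 with h | h
    · have h1 : m' = 0 := Nat.ceil_eq_zero.mpr (Real.logb_nonpos one_lt_two (by positivity) h)
      rw [h1]
      have : (2:ℝ)^(0:ℕ) = 1 := by norm_num
      rw [this, one_mul]
      linarith only [hρ'r₀, hr₀]
    · have h1 : (m':ℝ) ≤ Real.logb 2 (3*α*K/2) + 1 :=
        (Nat.ceil_lt_add_one (Real.logb_nonneg one_lt_two h.le)).le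
      have h2 := Real.rpow_le_rpow_of_exponent_le (by norm_num : (1:ℝ) ≤ 2) h1
      rw [Real.rpow_natCast] at h2
      rw [Real.rpow_add two_pos, Real.rpow_logb two_pos (by norm_num) (by linarith),
        Real.rpow_one] at h2
      -- 2^m' ≤ 3αK
      have h3 : (2:ℝ) ^ (m':ℕ) ≤ 3*α*K := by linarith only [h2]
      have h4 : 3*α*K/2 ≤ 2 ^ M := by
        have h5 : 3*α*K/2 ≤ (2:ℝ) ^ (3*α*K/2 : ℝ) := stmt13_le_two_rpow _
        refine h5.trans (Real.rpow_le_rpow_of_exponent_le (by norm_num) ?_)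
        rw [hM]
        have h6 : 3*α*K/2 ≤ 3*α*K/2 * C₀ ^ (K + 1/3) :=
          le_mul_of_one_le_right (by positivity) hC₀K13
        linarith only [h6]
      have h7 : ρ' * (3*α*K) ≤ 2 * r₀ := by
        rw [le_div_iff₀ h2Mpos] at hρ'M
        have h8 := mul_le_mul_of_nonneg_left h4 (by positivity : (0:ℝ) ≤ 2*ρ')
        have h9 : 2*ρ' * (3*α*K/2) = ρ' * (3*α*K) := by ring
        have h10 : 2*ρ' * (2^M) = 2*(ρ' * 2^M) := by ring
        rw [h9, h10] at h8
        linarith only [h8, hρ'M]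
      have h11 := mul_le_mul_of_nonneg_right h3 hρ'pos.le
      have h12 : 3*α*K*ρ' = ρ' * (3*α*K) := by ring
      rw [h12] at h11
      linarith only [h11, h7]
  have hm4 : (C₀:ℝ) ^ (m':ℕ) ≤ C₁ := by
    rw [hC₁, ← Real.rpow_natCast C₀ m']
    exact Real.rpow_le_rpow_of_exponent_le hC₀ hm3
  have hC₁pos : (0:ℝ) < C₁ := by rw [hC₁]; positivity
  have hC₁ge1 : (1:ℝ) ≤ C₁ := by rw [hC₁]; exact Real.one_le_rpow hC₀ (by linarith)
  -- measurability of ψ ∘ D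
  have hψDmeas : Measurable (fun y => ψ (D y)) := by
    have hmono : Monotone (fun t : ℝ => ψ (max t 0)) := by
      intro s t hst
      exact hψmono _ _ (le_max_right _ _) (max_le_max hst le_rfl)
    have heq : (fun y => ψ (D y)) = (fun t => ψ (max t 0)) ∘ D := by
      funext y
      simp [max_eq_left (hD0 y)]
    rw [heq]
    exact hmono.measurable.comp hDmeas
  -- the kernel set and kernel function for the Tonelli argument
  set SS : Set (X × X) :=
    {p | (p.2 ∈ Ω ∧ D p.2 < ρ') ∧ d p.1 p.2 < Rad p.2} with hSS
  set ff : X → X → ℝ≥0∞ := fun ζ y =>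
    Set.indicator SS (fun p => ENNReal.ofReal (D p.2 ^ γ * ψ (D p.2) ^ (-dd) * u p.2)) (ζ, y)
    with hff
  have hSSmeas : MeasurableSet SS := by
    have h1 : MeasurableSet {p : X × X | p.2 ∈ Ω} := measurable_snd hΩopen.measurableSet
    have h2 : MeasurableSet {p : X × X | D p.2 < ρ'} :=
      measurableSet_lt (hDmeas.comp measurable_snd) measurable_const
    have h3 : MeasurableSet {p : X × X | d p.1 p.2 < Rad p.2} :=
      measurableSet_lt hd_borel ((hψDmeas.comp measurable_snd).const_mul _)
    exact (h1.inter h2).inter h3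
  have hgmeas : Measurable
      (fun p : X × X => ENNReal.ofReal (D p.2 ^ γ * ψ (D p.2) ^ (-dd) * u p.2)) := by
    apply Measurable.ennreal_ofReal
    refine Measurable.mul (Measurable.mul ?_ ?_) (hu_meas.comp measurable_snd)
    · exact stmt13_measurable_rpow_const (hDmeas.comp measurable_snd) (fun p => hD0 p.2) γ
    · exact stmt13_measurable_rpow_const (hψDmeas.comp measurable_snd)
        (fun p => hψnn _ (hD0 p.2)) (-dd)
  have hffmeas : Measurable (fun p : X × X => ff p.1 p.2) := hgmeas.indicator hSSmeas
  -- σ-finiteness of μ and of H restricted to the boundary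
  obtain ⟨cw, rw', hcw1, hcw2⟩ := hcover 1 one_pos
  have hBopen : ∀ n, IsOpen {y | d (cw n) y < rw' n} :=
    fun n => isOpen_lt (hcont₁ (cw n)) continuous_const
  have hBspan : (⋃ n, {y | d (cw n) y < rw' n}) = Set.univ := by
    apply Set.eq_univ_of_forall; intro x
    obtain ⟨n, hn⟩ := hcw1 x
    exact Set.mem_iUnion.mpr ⟨n, hn⟩
  have hBfinμ : ∀ n, μ {y | d (cw n) y < rw' n} < ⊤ := by
    intro n
    rcases le_or_gt (rw' n) 0 with h | h
    · have he : {y | d (cw n) y < rw' n} = ∅ := by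
        apply Set.eq_empty_iff_forall_notMem.mpr
        intro y hy
        simp only [Set.mem_setOf_eq] at hy
        have := hd_nonneg (cw n) y
        linarith only [hy, this, h]
      rw [he, measure_empty]
      exact ENNReal.zero_lt_top
    · exact hfin _ _ h
  haveI hμsf : SigmaFinite μ :=
    (⟨fun n => {y | d (cw n) y < rw' n}, fun _ => Set.mem_univ _, hBfinμ, hBspan⟩ :
      μ.FiniteSpanningSetsIn Set.univ).sigmaFinite
  have hqd1 : ∀ n : ℕ, ∀ ζ₀ ∈ {y | d (cw n) y < rw' n}, ∀ ξ ∈ {y | d (cw n) y < rw' n},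
      d ζ₀ ξ ≤ 1 := by
    intro n ζ₀ hζ₀ ξ hξ
    have h1 : ENNReal.ofReal (d ζ₀ ξ) ≤ qdiam d {y | d (cw n) y < rw' n} := by
      refine le_trans (le_biSup (fun y => ENNReal.ofReal (d ζ₀ y)) hξ) ?_
      exact le_biSup (fun x => ⨆ y ∈ {y | d (cw n) y < rw' n}, ENNReal.ofReal (d x y)) hζ₀
    have h2 := h1.trans (hcw2 n)
    exact (ENNReal.ofReal_le_ofReal_iff (by norm_num)).mp h2
  haveI hHsf : SigmaFinite (H.restrict (frontier Ω)) := by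
    refine Measure.FiniteSpanningSetsIn.sigmaFinite
      (⟨fun n => {y | d (cw n) y < rw' n}, fun _ => Set.mem_univ _, ?_, hBspan⟩ :
        (H.restrict (frontier Ω)).FiniteSpanningSetsIn Set.univ)
    intro n
    rw [Measure.restrict_apply (hBopen n).measurableSet]
    rcases Set.eq_empty_or_nonempty ({y | d (cw n) y < rw' n} ∩ frontier Ω) with he | hne
    · rw [he]; simp
    · obtain ⟨ζ₀, hζ₀B, hζ₀F⟩ := hne
      have hsub : {y | d (cw n) y < rw' n} ∩ frontier Ω ⊆
          frontier Ω ∩ {z | d ζ₀ z < 2} := by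
        rintro ξ ⟨hξB, hξF⟩
        exact ⟨hξF, lt_of_le_of_lt (hqd1 n ζ₀ hζ₀B ξ hξB) one_lt_two⟩
      refine lt_of_le_of_lt (measure_mono hsub) ?_
      rw [hH _ (isClosed_frontier.measurableSet.inter
        (isOpen_lt (hcont₁ ζ₀) continuous_const).measurableSet)]
      exact lt_of_le_of_lt (hAhl ζ₀ hζ₀F 2 two_pos) ENNReal.ofReal_lt_top
  -- ========== the inner (boundary) estimate ==========
  have hSΩmeas : MeasurableSet {x | x ∈ Ω ∧ sInf ((d x) '' Ωᶜ) < ρ'} := by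
    exact hΩopen.measurableSet.inter (measurableSet_lt hDmeas measurable_const)
  have hcbig0 : (0:ℝ) ≤ cbig := by
    rw [hcbig]
    have := hC₁pos
    positivity
  have hinner : ∀ y : X, (∫⁻ ζ, ff ζ y ∂(H.restrict (frontier Ω))) ≤
      ENNReal.ofReal (C₄ * cbig ^ dd) *
        Set.indicator {x | x ∈ Ω ∧ sInf ((d x) '' Ωᶜ) < ρ'}
          (fun z => ENNReal.ofReal (sInf ((d z) '' Ωᶜ) ^ γ * u z)) y := by
    intro y
    by_cases hy : y ∈ Ω ∧ D y < ρ'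
    · have hDy0 : 0 < D y := hDpos y hy.1
      have hψy : 0 < ψ (D y) := hψpos _ hDy0
      have hRy : 0 < Rad y := by
        show 0 < (K + 1/3) * C₁ * ψ (D y)
        exact mul_pos (mul_pos hK13pos hC₁pos) hψy
      have hcy0 : 0 ≤ D y ^ γ * ψ (D y) ^ (-dd) * u y :=
        mul_nonneg (mul_nonneg (Real.rpow_nonneg hDy0.le _)
          (Real.rpow_nonneg hψy.le _)) (hu_nonneg y)
      have hballmeas : MeasurableSet {ζ' | d ζ' y < Rad y} :=
        (isOpen_lt (hcont₂ y) continuous_const).measurableSet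
      have hfeq : ∀ ζ, ff ζ y = Set.indicator {ζ' | d ζ' y < Rad y}
          (fun _ => ENNReal.ofReal (D y ^ γ * ψ (D y) ^ (-dd) * u y)) ζ := by
        intro ζ
        by_cases hc : d ζ y < Rad y
        · rw [Set.indicator_of_mem (show ζ ∈ {ζ' | d ζ' y < Rad y} from hc)]
          exact Set.indicator_of_mem (show (ζ, y) ∈ SS from ⟨hy, hc⟩) _
        · rw [Set.indicator_of_notMem (show ζ ∉ {ζ' | d ζ' y < Rad y} from hc)]
          exact Set.indicator_of_notMem (fun hmem => hc hmem.2) _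
      calc (∫⁻ ζ, ff ζ y ∂(H.restrict (frontier Ω)))
          = ∫⁻ ζ, Set.indicator {ζ' | d ζ' y < Rad y}
              (fun _ => ENNReal.ofReal (D y ^ γ * ψ (D y) ^ (-dd) * u y)) ζ
              ∂(H.restrict (frontier Ω)) := lintegral_congr hfeq
        _ = ENNReal.ofReal (D y ^ γ * ψ (D y) ^ (-dd) * u y) *
              (H.restrict (frontier Ω)) {ζ' | d ζ' y < Rad y} :=
            lintegral_indicator_const hballmeas _
        _ ≤ ENNReal.ofReal (C₄ * cbig ^ dd) *
              Set.indicator {x | x ∈ Ω ∧ sInf ((d x) '' Ωᶜ) < ρ'}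
                (fun z => ENNReal.ofReal (sInf ((d z) '' Ωᶜ) ^ γ * u z)) y := by
            rw [Measure.restrict_apply hballmeas]
            rcases Set.eq_empty_or_nonempty ({ζ' | d ζ' y < Rad y} ∩ frontier Ω)
              with he | ⟨ζ₀, hζ₀R, hζ₀F⟩
            · rw [he, measure_empty, mul_zero]
              exact zero_le
            · have hsub : {ζ' | d ζ' y < Rad y} ∩ frontier Ω ⊆
                  frontier Ω ∩ {z | d ζ₀ z < 2*K*Rad y} := by
                rintro ζ ⟨hζR, hζF⟩
                refine ⟨hζF, ?_⟩
                have h1 := hd_tri ζ₀ ζ y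
                have h2 : d y ζ = d ζ y := hd_symm y ζ
                have h3 : d ζ₀ y + d y ζ < 2 * Rad y := by
                  rw [h2]
                  have h4 : d ζ₀ y < Rad y := hζ₀R
                  have h5 : d ζ y < Rad y := hζR
                  linarith only [h4, h5]
                have h6 := mul_lt_mul_of_pos_left h3 hKpos
                show d ζ₀ ζ < 2*K*Rad y
                nlinarith only [h1, h6]
              have hH2 : H ({ζ' | d ζ' y < Rad y} ∩ frontier Ω) ≤
                  ENNReal.ofReal (C₄ * (2*K*Rad y) ^ dd) := by
                refine le_trans (measure_mono hsub) ?_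
                rw [hH _ (isClosed_frontier.measurableSet.inter
                  (isOpen_lt (hcont₁ ζ₀) continuous_const).measurableSet)]
                exact hAhl ζ₀ hζ₀F _ (by positivity)
              refine le_trans (mul_le_mul_right hH2 _) ?_
              have e0 : 2*K*Rad y = cbig * ψ (D y) := by
                show 2*K*((K + 1/3) * C₁ * ψ (D y)) = 2 * K * ((K + 1/3) * C₁) * ψ (D y)
                ring
              have e1 : (2*K*Rad y) ^ dd = cbig ^ dd * ψ (D y) ^ dd := by
                rw [e0, Real.mul_rpow hcbig0 hψy.le]
              have e2 : ψ (D y) ^ (-dd) * ψ (D y) ^ dd = 1 := by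
                rw [← Real.rpow_add hψy]
                norm_num
              have heq : (D y ^ γ * ψ (D y) ^ (-dd) * u y) * (C₄ * (2*K*Rad y) ^ dd) =
                  C₄ * cbig ^ dd * (D y ^ γ * u y) := by
                rw [e1]
                linear_combination (C₄ * cbig ^ dd * (D y ^ γ * u y)) * e2
              rw [← ENNReal.ofReal_mul hcy0, heq,
                ENNReal.ofReal_mul (by positivity : (0:ℝ) ≤ C₄ * cbig ^ dd)]
              rw [Set.indicator_of_mem (show y ∈ {x | x ∈ Ω ∧ sInf ((d x) '' Ωᶜ) < ρ'}
                from hy)]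
    · have hz : ∀ ζ, ff ζ y = 0 := by
        intro ζ
        exact Set.indicator_of_notMem (fun hmem => hy ⟨hmem.1.1, hmem.1.2⟩) _
      simp only [hz, lintegral_zero]
      exact zero_le
  -- ========== the pointwise sup estimate ==========
  have hsup : ∀ ζ ∈ frontier Ω,
      (⨆ x ∈ {x | x ∈ Ω ∧ φ (d x ζ) < α * sInf ((d x) '' Ωᶜ) ∧ sInf ((d x) '' Ωᶜ) < ρ},
        ENNReal.ofReal ((sInf ((d x) '' Ωᶜ)) ^ γ * (ψ (sInf ((d x) '' Ωᶜ))) ^ (-dd) * u x) *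
          μ {y | d x y < sInf ((d x) '' Ωᶜ) / (3 * K)}) ≤
      ENNReal.ofReal cstar * ∫⁻ y, ff ζ y ∂μ := by
    intro ζ hζ
    have hζc : ζ ∈ Ωᶜ := by
      rw [hΩopen.frontier_eq] at hζ
      exact hζ.2
    refine iSup₂_le ?_
    rintro x ⟨hxΩ, hxφ, hxρ⟩
    have hDx : 0 < D x := hDpos x hxΩ
    have h3K : (0:ℝ) < 3*K := by linarith only [hKpos]
    have h2n₀pos : (0:ℝ) < 2^(n₀:ℕ) := by positivity
    set s : ℝ := D x / (3*K) / 2^(n₀:ℕ) with hs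
    have hspos : 0 < s := by rw [hs]; positivity
    have hsle : s ≤ D x / (3*K) := by
      rw [hs]; exact div_le_self (by positivity) (one_le_pow₀ (by norm_num))
    have hDx3K : D x / (3*K) ≤ D x := div_le_self hDx.le (by linarith only [hK])
    have hxρ' : D x < ρ := hxρ
    have hsρ₀ : s ≤ ρ₀ := le_trans hsle (le_trans hDx3K (le_trans hxρ'.le hρρ₀))
    have hsε : s ≤ ε₀ * D x := by
      have h1 : (1:ℝ) ≤ ε₀ * 2^(n₀:ℕ) := by
        have h2 := mul_le_mul_of_nonneg_left h2n₀ hε₀.le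
        rw [mul_inv_cancel₀ (ne_of_gt hε₀)] at h2
        exact h2
      have h3 : (1:ℝ) ≤ ε₀ * (3*K*2^(n₀:ℕ)) := by
        have h3a := mul_le_mul_of_nonneg_left h1 (show (0:ℝ) ≤ 3*K by linarith only [hK])
        have h3b : (1:ℝ) ≤ 3*K := by linarith only [hK]
        nlinarith only [h3a, h3b]
      rw [hs, div_div, div_le_iff₀ (by positivity)]
      have h4 := mul_le_mul_of_nonneg_left h3 hDx.le
      nlinarith only [h4, hDx]
    have hq := hqns Ω hΩopen hΩuniv x hxΩ s hspos (le_min hsρ₀ hsε)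
    have hdoubx := hμchain n₀ x (D x / (3*K)) (by positivity)
      (le_trans hDx3K (le_trans hxρ'.le hρρ₀))
    rw [← hs] at hdoubx
    -- geometry of points in the small ball
    have hgeo : ∀ y, d x y < D x / (3*K) →
        y ∈ Ω ∧ 2 * D x < 3*K*D y ∧ D y < (K + 1/3) * D x := by
      intro y hyb
      have hyΩ : y ∈ Ω := hballΩ x y (lt_of_lt_of_le hyb hDx3K)
      have hy2 : d x y * (3*K) < D x := (lt_div_iff₀ h3K).mp hyb
      refine ⟨hyΩ, ?_, ?_⟩
      · have h1 := hDtri x y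
        nlinarith only [h1, hy2]
      · have h1 := hDtri y x
        rw [hd_symm y x] at h1
        nlinarith only [h1, hy2, hKpos]
    -- admissibility facts at x
    have hdxζ0 : 0 ≤ d x ζ := hd_nonneg x ζ
    have hDxle : D x ≤ d x ζ := hDle x ζ hζc
    have hφDx : φ (D x) < α * D x :=
      lt_of_le_of_lt (hφmono (Set.mem_Ici.mpr hDx.le) (Set.mem_Ici.mpr hdxζ0) hDxle) hxφ
    have hαDx0 : (0:ℝ) ≤ α * D x := by positivity
    have hDψ : D x < ψ (α * D x) := by
      have h1 := hψstrict (φ (D x)) (α * D x) (hφ_nonneg _ hDx.le) hφDx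
      rwa [hψ_inv.1 (Set.mem_Ici.mpr hDx.le)] at h1
    have hdζψ : d x ζ < ψ (α * D x) := by
      have h1 := hψstrict (φ (d x ζ)) (α * D x) (hφ_nonneg _ hdxζ0) hxφ
      rwa [hψ_inv.1 (Set.mem_Ici.mpr hdxζ0)] at h1
    -- membership of the small ball in the kernel set
    have hmem : ∀ y, d x y < s → (ζ, y) ∈ SS := by
      intro y hys
      have hyb : d x y < D x / (3*K) := lt_of_lt_of_le hys hsle
      obtain ⟨hyΩ, hylow, hyup⟩ := hgeo y hyb
      have hDy : 0 < D y := hDpos y hyΩ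
      have hDyρ' : D y < ρ' := by
        refine lt_of_lt_of_le hyup ?_
        rw [hρ']
        exact mul_le_mul_of_nonneg_left hxρ'.le hK13pos.le
      refine ⟨⟨hyΩ, hDyρ'⟩, ?_⟩
      -- d ζ y < Rad y
      have h1 := hd_tri ζ y x
      have h2 : d ζ x = d x ζ := hd_symm ζ x
      have hy2 : d x y * (3*K) < D x := (lt_div_iff₀ h3K).mp hyb
      have h5 : K * d x ζ < K * ψ (α * D x) := mul_lt_mul_of_pos_left hdζψ hKpos
      have h6 : d ζ y < (K + 1/3) * ψ (α * D x) := by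
        rw [h2] at h1
        nlinarith only [h1, hy2, h5, hDψ, hKpos]
      have hαm : ψ (α * D x) ≤ C₀^(m':ℕ) * ψ (D y) := by
        have hax : α * D x ≤ 2^(m':ℕ) * D y := by
          have ha1 := mul_lt_mul_of_pos_left hylow hα
          have ha2 := mul_le_mul_of_nonneg_right hm1 hDy.le
          nlinarith only [ha1, ha2]
        refine (hψmono _ _ hαDx0 hax).trans ?_
        refine hψchain m' (D y) hDy.le ?_
        have h8 : (2:ℝ)^(m':ℕ) * D y ≤ 2^(m':ℕ) * ρ' :=
          mul_le_mul_of_nonneg_left hDyρ'.le (by positivity)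
        linarith only [h8, hm2]
      show d ζ y < Rad y
      have h9 : Rad y = (K + 1/3) * C₁ * ψ (D y) := rfl
      rw [h9]
      have h10 : C₀^(m':ℕ) * ψ (D y) ≤ C₁ * ψ (D y) :=
        mul_le_mul_of_nonneg_right hm4 (hψnn _ hDy.le)
      have h11 := mul_le_mul_of_nonneg_left (hαm.trans h10) hK13pos.le
      calc d ζ y < (K + 1/3) * ψ (α * D x) := h6
        _ ≤ (K + 1/3) * (C₁ * ψ (D y)) := h11
        _ = (K + 1/3) * C₁ * ψ (D y) := by ring
    -- pointwise comparison of the weights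
    have hccx : ∀ y, d x y < s →
        D x ^ γ * ψ (D x) ^ (-dd) ≤
          (3*K/2)^|γ| * ((C₀^(k':ℕ))^dd) * (D y ^ γ * ψ (D y) ^ (-dd)) := by
      intro y hys
      have hyb : d x y < D x / (3*K) := lt_of_lt_of_le hys hsle
      obtain ⟨hyΩ, hylow, hyup⟩ := hgeo y hyb
      have hDy : 0 < D y := hDpos y hyΩ
      -- the γ part
      have hgam : D x ^ γ ≤ (3*K/2)^|γ| * D y ^ γ := by
        rcases le_or_gt 0 γ with hγ | hγ
        · have h4 : D x ≤ 3*K/2 * D y := by linarith only [hylow]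
          calc D x ^ γ ≤ (3*K/2 * D y) ^ γ := Real.rpow_le_rpow hDx.le h4 hγ
            _ = (3*K/2)^γ * D y ^ γ := Real.mul_rpow (by positivity) hDy.le
            _ = (3*K/2)^|γ| * D y ^ γ := by rw [abs_of_nonneg hγ]
        · have h4 : D y / (K+1/3) ≤ D x := by
            rw [div_le_iff₀ hK13pos]
            nlinarith only [hyup]
          have h5 : (0:ℝ) < D y / (K+1/3) := by positivity
          calc D x ^ γ ≤ (D y / (K+1/3)) ^ γ := Real.rpow_le_rpow_of_nonpos h5 h4 hγ.le
            _ = D y ^ γ / (K+1/3) ^ γ := Real.div_rpow hDy.le hK13pos.le γ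
            _ = D y ^ γ * ((K+1/3) ^ γ)⁻¹ := by rw [div_eq_mul_inv]
            _ = D y ^ γ * (K+1/3) ^ (-γ) := by rw [← Real.rpow_neg hK13pos.le]
            _ ≤ D y ^ γ * (3*K/2) ^ (-γ) := by
                refine mul_le_mul_of_nonneg_left ?_ (Real.rpow_nonneg hDy.le _)
                refine Real.rpow_le_rpow hK13pos.le (by linarith only [hK]) (by linarith only [hγ])
            _ = (3*K/2)^|γ| * D y ^ γ := by rw [abs_of_neg hγ]; ring
      -- the ψ part
      have hba : ψ (D y) ≤ C₀^(k':ℕ) * ψ (D x) := by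
        have h4 : D y ≤ 2^(k':ℕ) * D x := by
          have h5 := mul_le_mul_of_nonneg_right hk1 hDx.le
          nlinarith only [hyup, h5]
        refine (hψmono _ _ hDy.le h4).trans ?_
        refine hψchain k' (D x) hDx.le ?_
        -- 2^k' * D x ≤ 2 r₀
        have h6 : (2:ℝ)^(k':ℕ) * D x ≤ 2*(K+1/3) * D x :=
          mul_le_mul_of_nonneg_right hk2 hDx.le
        have h7 : 2*(K+1/3) * D x ≤ 2 * ρ' := by
          rw [hρ']
          nlinarith only [hxρ', hK13pos]
        linarith only [h6, h7, hρ'r₀]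
      have ha : 0 < ψ (D x) := hψpos _ hDx
      have hb : 0 < ψ (D y) := hψpos _ hDy
      have hCk : (0:ℝ) < C₀^(k':ℕ) := by positivity
      have hpsi : ψ (D x) ^ (-dd) ≤ ((C₀^(k':ℕ))^dd) * ψ (D y) ^ (-dd) := by
        have h6 : ψ (D y) ^ dd ≤ ((C₀^(k':ℕ))^dd) * ψ (D x) ^ dd := by
          rw [← Real.mul_rpow hCk.le ha.le]
          exact Real.rpow_le_rpow hb.le hba hdd.le
        rw [Real.rpow_neg ha.le, Real.rpow_neg hb.le]
        rw [← div_eq_mul_inv, inv_eq_one_div,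
          div_le_div_iff₀ (by positivity) (by positivity)]
        calc 1 * ψ (D y) ^ dd = ψ (D y) ^ dd := one_mul _
          _ ≤ ((C₀^(k':ℕ))^dd) * ψ (D x) ^ dd := h6
      calc D x ^ γ * ψ (D x) ^ (-dd)
          ≤ ((3*K/2)^|γ| * D y ^ γ) * (((C₀^(k':ℕ))^dd) * ψ (D y) ^ (-dd)) := by
            refine mul_le_mul hgam hpsi (Real.rpow_nonneg ha.le _) ?_
            exact mul_nonneg (Real.rpow_nonneg (by linarith only [hKpos]) _)
              (Real.rpow_nonneg hDy.le _)
        _ = (3*K/2)^|γ| * ((C₀^(k':ℕ))^dd) * (D y ^ γ * ψ (D y) ^ (-dd)) := by ring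
    -- assembling the estimate in ℝ≥0∞
    have hcx0 : 0 ≤ D x ^ γ * ψ (D x) ^ (-dd) :=
      mul_nonneg (Real.rpow_nonneg hDx.le _) (Real.rpow_nonneg (hψnn _ hDx.le) _)
    have hcc0 : (0:ℝ) ≤ (3*K/2)^|γ| * ((C₀^(k':ℕ))^dd) :=
      mul_nonneg (Real.rpow_nonneg (by linarith only [hKpos]) _)
        (Real.rpow_nonneg (by positivity) _)
    have hBsmeas : MeasurableSet {y | d x y < s} :=
      (isOpen_lt (hcont₁ x) continuous_const).measurableSet
    have key3 : (∫⁻ y in {y | d x y < s},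
        ENNReal.ofReal (D x ^ γ * ψ (D x) ^ (-dd)) * ENNReal.ofReal (u y) ∂μ) ≤
        ENNReal.ofReal ((3*K/2)^|γ| * ((C₀^(k':ℕ))^dd)) * ∫⁻ y, ff ζ y ∂μ := by
      calc (∫⁻ y in {y | d x y < s},
            ENNReal.ofReal (D x ^ γ * ψ (D x) ^ (-dd)) * ENNReal.ofReal (u y) ∂μ)
          ≤ ∫⁻ y in {y | d x y < s},
              ENNReal.ofReal ((3*K/2)^|γ| * ((C₀^(k':ℕ))^dd)) * ff ζ y ∂μ := by
            refine setLIntegral_mono' hBsmeas ?_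
            intro y hy
            have hmemy := hmem y hy
            have hcc := hccx y hy
            rw [show ff ζ y = ENNReal.ofReal (D y ^ γ * ψ (D y) ^ (-dd) * u y) from
              Set.indicator_of_mem hmemy _]
            rw [← ENNReal.ofReal_mul hcx0, ← ENNReal.ofReal_mul hcc0]
            apply ENNReal.ofReal_le_ofReal
            calc D x ^ γ * ψ (D x) ^ (-dd) * u y
                ≤ ((3*K/2)^|γ| * ((C₀^(k':ℕ))^dd) * (D y ^ γ * ψ (D y) ^ (-dd))) * u y :=
                  mul_le_mul_of_nonneg_right hcc (hu_nonneg y)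
              _ = (3*K/2)^|γ| * ((C₀^(k':ℕ))^dd) * (D y ^ γ * ψ (D y) ^ (-dd) * u y) := by
                  ring
        _ ≤ ∫⁻ y, ENNReal.ofReal ((3*K/2)^|γ| * ((C₀^(k':ℕ))^dd)) * ff ζ y ∂μ :=
            setLIntegral_le_lintegral _ _
        _ = ENNReal.ofReal ((3*K/2)^|γ| * ((C₀^(k':ℕ))^dd)) * ∫⁻ y, ff ζ y ∂μ :=
            lintegral_const_mul' _ _ ENNReal.ofReal_ne_top
    show ENNReal.ofReal (D x ^ γ * ψ (D x) ^ (-dd) * u x) *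
        μ {y | d x y < D x / (3 * K)} ≤ ENNReal.ofReal cstar * ∫⁻ y, ff ζ y ∂μ
    calc ENNReal.ofReal (D x ^ γ * ψ (D x) ^ (-dd) * u x) * μ {y | d x y < D x / (3 * K)}
        = ENNReal.ofReal (D x ^ γ * ψ (D x) ^ (-dd)) *
            (ENNReal.ofReal (u x) * μ {y | d x y < D x / (3 * K)}) := by
          rw [ENNReal.ofReal_mul hcx0]; ring
      _ ≤ ENNReal.ofReal (D x ^ γ * ψ (D x) ^ (-dd)) *
            (ENNReal.ofReal (u x) * ((ENNReal.ofReal A)^(n₀:ℕ) * μ {y | d x y < s})) :=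
          mul_le_mul_right (mul_le_mul_right hdoubx _) _
      _ = (ENNReal.ofReal A)^(n₀:ℕ) * (ENNReal.ofReal (D x ^ γ * ψ (D x) ^ (-dd)) *
            (ENNReal.ofReal (u x) * μ {y | d x y < s})) := by ring
      _ ≤ (ENNReal.ofReal A)^(n₀:ℕ) * (ENNReal.ofReal (D x ^ γ * ψ (D x) ^ (-dd)) *
            (ENNReal.ofReal K₁ * ∫⁻ y in {y | d x y < s}, ENNReal.ofReal (u y) ∂μ)) :=
          mul_le_mul_right (mul_le_mul_right hq.2 _) _
      _ = (ENNReal.ofReal A)^(n₀:ℕ) * ENNReal.ofReal K₁ *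
            ∫⁻ y in {y | d x y < s},
              ENNReal.ofReal (D x ^ γ * ψ (D x) ^ (-dd)) * ENNReal.ofReal (u y) ∂μ := by
          rw [lintegral_const_mul' (ENNReal.ofReal (D x ^ γ * ψ (D x) ^ (-dd))) _
            ENNReal.ofReal_ne_top]
          ring
      _ ≤ (ENNReal.ofReal A)^(n₀:ℕ) * ENNReal.ofReal K₁ *
            (ENNReal.ofReal ((3*K/2)^|γ| * ((C₀^(k':ℕ))^dd)) * ∫⁻ y, ff ζ y ∂μ) :=
          mul_le_mul_right key3 _
      _ = ENNReal.ofReal cstar * ∫⁻ y, ff ζ y ∂μ := by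
          have he : ENNReal.ofReal cstar =
              ENNReal.ofReal ((3*K/2)^|γ| * ((C₀^(k':ℕ))^dd)) * ENNReal.ofReal K₁ *
                (ENNReal.ofReal A)^(n₀:ℕ) := by
            rw [hcstar, ← ENNReal.ofReal_pow (by linarith only [hA]),
              ← ENNReal.ofReal_mul hcc0,
              ← ENNReal.ofReal_mul (mul_nonneg hcc0 (by linarith only [hK₁]))]
          rw [he]; ring
  -- ========== the constant inequality ==========
  set Cb3 : ℝ := C₁ * (C₀ ^ α / 3 + K * C₀ ^ (K + 1/3)) *
    (K * (1 + C₀ ^ (α + 1) / (C₁ * (C₀ ^ α / 3 + K * C₀ ^ (K + 1/3))))) with hCb3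
  have hC₂pos : (0:ℝ) < C₀ ^ α / 3 + K * C₀ ^ (K + 1/3) := by positivity
  have hC₁C₂pos : (0:ℝ) < C₁ * (C₀ ^ α / 3 + K * C₀ ^ (K + 1/3)) := mul_pos hC₁pos hC₂pos
  have hCexp0 : (0:ℝ) ≤ C₀ ^ (α + 1) := Real.rpow_nonneg hC₀pos.le _
  have hprod : Cb3 = K * (C₁ * (C₀ ^ α / 3 + K * C₀ ^ (K + 1/3)) + C₀ ^ (α + 1)) := by
    rw [hCb3]
    field_simp
  have hcbig_le : cbig ≤ Cb3 := by
    rw [hprod, hcbig]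
    have h2 : (1:ℝ) ≤ C₀ ^ α := Real.one_le_rpow hC₀ hα.le
    have h3 : (2:ℝ) ^ (K + 1/3) ≤ C₀ ^ (K + 1/3) :=
      Real.rpow_le_rpow (by norm_num) hC₀2 (by linarith only [hK])
    have h4 := stmt13_two_rpow_ge K hK
    have h5 : K * (7/3) ≤ K * C₀ ^ (K + 1/3) :=
      mul_le_mul_of_nonneg_left (h4.trans h3) hKpos.le
    have h1 : 2 * (K + 1/3) ≤ C₀ ^ α / 3 + K * C₀ ^ (K + 1/3) := by
      linarith only [h2, h5, hK]
    have h7 := mul_le_mul_of_nonneg_left h1 hC₁pos.le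
    have h8 := mul_le_mul_of_nonneg_left h7 hKpos.le
    nlinarith only [h8, mul_nonneg hKpos.le hCexp0]
  have hCb30 : (0:ℝ) ≤ Cb3 := by
    rw [hCb3]
    have hb1 : (0:ℝ) ≤ 1 + C₀ ^ (α + 1) / (C₁ * (C₀ ^ α / 3 + K * C₀ ^ (K + 1/3))) := by
      have := div_nonneg hCexp0 hC₁C₂pos.le
      linarith only [this]
    exact mul_nonneg hC₁C₂pos.le (mul_nonneg hKpos.le hb1)
  have hp3 : C₄ * cbig ^ dd ≤ 1 + C₄ * Cb3 ^ dd := by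
    have h1 := Real.rpow_le_rpow hcbig0 hcbig_le hdd.le
    have h2 := mul_le_mul_of_nonneg_left h1 hC₄.le
    linarith only [h2]
  have hp2 : ((C₀:ℝ) ^ (k':ℕ)) ^ dd ≤ C₀ ^ (dd * (K + 1/3)) := by
    rw [← Real.rpow_natCast C₀ k', ← Real.rpow_mul hC₀pos.le]
    refine Real.rpow_le_rpow_of_exponent_le hC₀ ?_
    have h1 := mul_le_mul_of_nonneg_right hk3 hdd.le
    nlinarith only [h1]
  have hp1 : A ^ (n₀:ℕ) ≤ A ^ ((1:ℝ) - Real.logb 2 ε₀) := by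
    rw [← Real.rpow_natCast A n₀]
    exact Real.rpow_le_rpow_of_exponent_le hA hn₀le
  have hW0 : (0:ℝ) ≤ (3*K/2) ^ |γ| * K₁ :=
    mul_nonneg (Real.rpow_nonneg (by linarith only [hKpos]) _) (by linarith only [hK₁])
  have hA0 : (0:ℝ) ≤ A ^ (n₀:ℕ) := pow_nonneg (by linarith only [hA]) _
  have hcbdd0 : (0:ℝ) ≤ C₄ * cbig ^ dd := mul_nonneg hC₄.le (Real.rpow_nonneg hcbig0 _)
  have hbig0 : (0:ℝ) ≤ 1 + C₄ * Cb3 ^ dd := by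
    have := mul_nonneg hC₄.le (Real.rpow_nonneg hCb30 dd)
    linarith only [this]
  have hcstar0 : (0:ℝ) ≤ cstar := by
    rw [hcstar]
    exact mul_nonneg (mul_nonneg (mul_nonneg
      (Real.rpow_nonneg (by linarith only [hKpos]) _)
      (Real.rpow_nonneg (by positivity) _)) (by linarith only [hK₁])) hA0
  have hconst : cstar * (C₄ * cbig ^ dd) ≤
      (3 * K / 2) ^ |γ| * K₁ * A ^ ((1:ℝ) - Real.logb 2 ε₀) * C₀ ^ (dd * (K + 1/3)) *
        (1 + C₄ * Cb3 ^ dd) := by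
    calc cstar * (C₄ * cbig ^ dd)
        = ((3*K/2) ^ |γ| * K₁) *
            (((C₀ ^ (k':ℕ)) ^ dd) * (A ^ (n₀:ℕ) * (C₄ * cbig ^ dd))) := by
          rw [hcstar]; ring
      _ ≤ ((3*K/2) ^ |γ| * K₁) *
            ((C₀ ^ (dd * (K + 1/3))) *
              (A ^ ((1:ℝ) - Real.logb 2 ε₀) * (1 + C₄ * Cb3 ^ dd))) := by
          refine mul_le_mul_of_nonneg_left ?_ hW0
          refine mul_le_mul hp2 ?_ (mul_nonneg hA0 hcbdd0) (Real.rpow_nonneg hC₀pos.le _)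
          exact mul_le_mul hp1 hp3 hcbdd0 (Real.rpow_nonneg (by linarith only [hA]) _)
      _ = (3 * K / 2) ^ |γ| * K₁ * A ^ ((1:ℝ) - Real.logb 2 ε₀) * C₀ ^ (dd * (K + 1/3)) *
            (1 + C₄ * Cb3 ^ dd) := by ring
  -- ========== final assembly ==========
  refine le_trans (setLIntegral_mono' isClosed_frontier.measurableSet hsup) ?_
  rw [lintegral_const_mul' (ENNReal.ofReal cstar) _ ENNReal.ofReal_ne_top]
  rw [lintegral_lintegral_swap hffmeas.aemeasurable]
  refine le_trans (mul_le_mul_right (lintegral_mono hinner) _) ?_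
  rw [lintegral_const_mul' _ _ ENNReal.ofReal_ne_top, lintegral_indicator hSΩmeas]
  rw [← mul_assoc, ← ENNReal.ofReal_mul hcstar0]
  exact mul_le_mul_left (ENNReal.ofReal_le_ofReal hconst) _
end

section
/- (Corollary 2.6) Under the hypotheses of the Main Theorem, suppose additionally that ∫_Ω δ_K(x)^γ u(x) dμ(x) < ∞. Then for H_K^d-almost every (φ,α)-accessible point ζ ∈ ∂Ω, lim_{ρ→0} ( sup_{x ∈ Γ_{φ,ρ}(ζ,α)} { δ_K(x)^γ μ(B_K(x)) [φ⁻¹(δ_K(x))]^{−d} u(x) } ) = 0. -/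
open MeasureTheory
open scoped ENNReal

set_option maxHeartbeats 4000000 in
/-- Corollary 2.6: under the hypotheses of the Main Theorem and the
integrability assumption, for `H_K^d`-a.e. `(φ,α)`-accessible boundary point the
weighted supremum tends to `0` as `ρ → 0`. -/
theorem stmt_15 {X : Type*} [TopologicalSpace X] [MeasurableSpace X] [BorelSpace X]
    (K : ℝ) (hK : 1 ≤ K)
    (d : X → X → ℝ)
    (hd_nonneg : ∀ x y, 0 ≤ d x y)
    (hd_symm : ∀ x y, d x y = d y x)
    (hd_eq : ∀ x y, d x y = 0 ↔ x = y)
    (hd_tri : ∀ x y z, d x y ≤ K * (d x z + d z y))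
    (hbasis : ∀ x : X, (nhds x).HasBasis (fun r : ℝ => 0 < r) (fun r => {y | d x y < r}))
    (hcont₁ : ∀ x : X, Continuous (fun y => d x y))
    (hcont₂ : ∀ y : X, Continuous (fun x => d x y))
    (hd_borel : Measurable (fun p : X × X => d p.1 p.2))
    (μ : Measure X)
    (hpos : ∀ x : X, ∀ r : ℝ, 0 < r → 0 < μ {y | d x y < r})
    (hfin : ∀ x : X, ∀ r : ℝ, 0 < r → μ {y | d x y < r} < ⊤)
    (A ρ₀ : ℝ) (hA : 1 ≤ A) (hρ₀ : 0 < ρ₀)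
    (hdoub : ∀ x : X, ∀ r : ℝ, 0 < r → r ≤ ρ₀ →
      μ {y | d x y < r} ≤ ENNReal.ofReal A * μ {y | d x y < r / 2})
    -- condition (1): countable covers by quasiballs of arbitrarily small diameter
    (hcover : ∀ ε : ℝ, 0 < ε → ∃ (c : ℕ → X) (r : ℕ → ℝ),
      (∀ x : X, ∃ n, d (c n) x < r n) ∧
      ∀ n, qdiam d {y | d (c n) y < r n} ≤ ENNReal.ofReal ε)
    (dd : ℝ) (hdd : 0 < dd)
    -- H is the d-dimensional Hausdorff measure built from d_K
    (H : Measure X) (hH : ∀ S : Set X, MeasurableSet S → H S = hausdorffQ d dd S)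
    (φ ψ : ℝ → ℝ) (C₀ r₀ : ℝ) (hC₀ : 1 ≤ C₀) (hr₀ : 0 < r₀)
    (hφ_nonneg : ∀ t, 0 ≤ t → 0 ≤ φ t)
    (hφ_mono : StrictMonoOn φ (Set.Ici 0))
    (hφ_surj : Set.SurjOn φ (Set.Ici 0) (Set.Ici 0))
    (hψ_maps : Set.MapsTo ψ (Set.Ici 0) (Set.Ici 0))
    (hψ_inv : Set.InvOn ψ φ (Set.Ici 0) (Set.Ici 0))
    (hφ_doub : ∀ t, 0 ≤ t → t ≤ r₀ → φ (2 * t) ≤ C₀ * φ t)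
    (hψ_doub : ∀ s, 0 ≤ s → s ≤ r₀ → ψ (2 * s) ≤ C₀ * ψ s)
    (α γ C₄ : ℝ) (hα : 0 < α) (hC₄ : 0 < C₄)
    (u : X → ℝ) (hu_nonneg : ∀ x, 0 ≤ u x) (hu_meas : Measurable u)
    (K₁ ε₀ : ℝ) (hK₁ : 1 ≤ K₁) (hε₀ : 0 < ε₀) (hε₀1 : ε₀ < 1)
    -- u is K₁-quasinearly subharmonic with parameter ε₀:
    (hqns : ∀ Ω' : Set X, IsOpen Ω' → Ω' ≠ Set.univ → ∀ x ∈ Ω', ∀ r : ℝ, 0 < r →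
      r ≤ min ρ₀ (ε₀ * sInf ((d x) '' Ω'ᶜ)) →
      (∫⁻ y in {y | d x y < r}, ENNReal.ofReal (u y) ∂μ) < ⊤ ∧
      ENNReal.ofReal (u x) * μ {y | d x y < r} ≤
        ENNReal.ofReal K₁ * ∫⁻ y in {y | d x y < r}, ENNReal.ofReal (u y) ∂μ)
    (x₁ : X) (Ω : Set X) (hΩsub : Ω ⊆ connectedComponent x₁)
    (hΩne : Ω ≠ connectedComponent x₁) (hΩopen : IsOpen Ω) (hΩconn : IsConnected Ω)
    (hAhlfors : ∀ x ∈ frontier Ω, ∀ r : ℝ, 0 < r →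
      hausdorffQ d dd (frontier Ω ∩ {y | d x y < r}) ≤ ENNReal.ofReal (C₄ * r ^ dd))
    (hint : (∫⁻ x in Ω, ENNReal.ofReal ((sInf ((d x) '' Ωᶜ)) ^ γ * u x) ∂μ) < ⊤) :
    ∀ᵐ ζ ∂(H.restrict (frontier Ω)),
      -- if ζ is a (φ,α)-accessible boundary point ...
      (∀ r : ℝ, 0 < r → ∃ x, (x ∈ Ω ∧ φ (d x ζ) < α * sInf ((d x) '' Ωᶜ)) ∧ d ζ x < r) →
      Filter.Tendsto
        (fun ρ : ℝ =>
          ⨆ x ∈ {x | x ∈ Ω ∧ φ (d x ζ) < α * sInf ((d x) '' Ωᶜ) ∧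
              sInf ((d x) '' Ωᶜ) < ρ},
            ENNReal.ofReal ((sInf ((d x) '' Ωᶜ)) ^ γ *
                (ψ (sInf ((d x) '' Ωᶜ))) ^ (-dd) * u x) *
              μ {y | d x y < sInf ((d x) '' Ωᶜ) / (3 * K)})
        (nhdsWithin 0 (Set.Ioi 0)) (nhds 0) := by
  classical
  have hK0 : (0:ℝ) < K := lt_of_lt_of_le one_pos hK
  suffices main : ∀ (δf : X → ℝ) (Tf : X → ℝ≥0∞),
      δf = (fun x => sInf ((d x) '' Ωᶜ)) →
      Tf = (fun x => ENNReal.ofReal (δf x ^ γ * (ψ (δf x)) ^ (-dd) * u x) *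
        μ {y | d x y < δf x / (3 * K)}) →
      ∀ᵐ ζ ∂(H.restrict (frontier Ω)),
        (∀ r : ℝ, 0 < r → ∃ x, (x ∈ Ω ∧ φ (d x ζ) < α * δf x) ∧ d ζ x < r) →
        Filter.Tendsto (fun ρ : ℝ =>
            ⨆ x ∈ {x | x ∈ Ω ∧ φ (d x ζ) < α * δf x ∧ δf x < ρ}, Tf x)
          (nhdsWithin 0 (Set.Ioi 0)) (nhds 0) by
    exact main _ _ rfl rfl
  intro δf Tf hδf hTf
  have hδf' : ∀ x, δf x = sInf ((d x) '' Ωᶜ) := fun x => by rw [hδf]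
  have hT' : ∀ x, Tf x = ENNReal.ofReal (δf x ^ γ * (ψ (δf x)) ^ (-dd) * u x) *
      μ {y | d x y < δf x / (3 * K)} := fun x => by rw [hTf]
  have hself : ∀ x, d x x = 0 := fun x => (hd_eq x x).2 rfl
  have hballopen : ∀ (x : X) (r : ℝ), IsOpen {y | d x y < r} := fun x r =>
    isOpen_Iio.preimage (hcont₁ x)
  have hballmeas : ∀ (x : X) (r : ℝ), MeasurableSet {y | d x y < r} := fun x r =>
    (hballopen x r).measurableSet
  have hΩc : Ωᶜ.Nonempty := by
    obtain ⟨p, hp, hpn⟩ := Set.exists_of_ssubset (hΩsub.ssubset_of_ne hΩne)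
    exact ⟨p, hpn⟩
  have hΩuniv : Ω ≠ Set.univ := by
    intro h
    rcases hΩc with ⟨p, hp⟩
    exact hp (h ▸ Set.mem_univ p)
  have himg : ∀ x : X, ((d x) '' Ωᶜ).Nonempty := fun x => hΩc.image _
  have hbdd : ∀ x : X, BddBelow ((d x) '' Ωᶜ) := fun x =>
    ⟨0, by rintro y ⟨z, hz, rfl⟩; exact hd_nonneg x z⟩
  have hδ_nonneg : ∀ x, 0 ≤ δf x := fun x => by
    rw [hδf']; exact Real.sInf_nonneg (by rintro y ⟨z, hz, rfl⟩; exact hd_nonneg x z)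
  have hδ_le : ∀ x z, z ∈ Ωᶜ → δf x ≤ d x z := fun x z hz => by
    rw [hδf']; exact csInf_le (hbdd x) (Set.mem_image_of_mem _ hz)
  have hδ_pos : ∀ x, x ∈ Ω → 0 < δf x := by
    intro x hx
    obtain ⟨r, hr, hsub⟩ := (hbasis x).mem_iff.mp (hΩopen.mem_nhds hx)
    have hrle : r ≤ δf x := by
      rw [hδf']
      refine le_csInf (himg x) ?_
      rintro y ⟨z, hz, rfl⟩
      by_contra hlt
      push_neg at hlt
      exact hz (hsub hlt)
    linarith
  have hδ_mem : ∀ y, 0 < δf y → y ∈ Ω := by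
    intro y hy
    by_contra hyn
    have h1 := hδ_le y y hyn
    rw [hself] at h1; linarith
  have hquasi : ∀ x y, δf x ≤ K * d x y + K * δf y := by
    intro x y
    have h1 : (δf x - K * d x y) / K ≤ δf y := by
      rw [hδf' y]
      refine le_csInf (himg y) ?_
      rintro w ⟨z, hz, rfl⟩
      rw [div_le_iff₀ hK0]
      have h2 : δf x ≤ K * (d x y + d y z) := (hδ_le x z hz).trans (hd_tri x z y)
      nlinarith
    rw [div_le_iff₀ hK0] at h1
    nlinarith
  have hδopen : ∀ a : ℝ, IsOpen {x | δf x < a} := by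
    intro a
    have hset : {x | δf x < a} = ⋃ z ∈ Ωᶜ, {x | d x z < a} := by
      ext x
      simp only [Set.mem_setOf_eq, Set.mem_iUnion]
      constructor
      · intro hxa
        have hxa' : sInf ((d x) '' Ωᶜ) < a := by rw [← hδf']; exact hxa
        obtain ⟨w, ⟨z, hz, rfl⟩, hw⟩ := (csInf_lt_iff (hbdd x) (himg x)).mp hxa'
        exact ⟨z, hz, hw⟩
      · rintro ⟨z, hz, hlt⟩
        exact lt_of_le_of_lt (hδ_le x z hz) hlt
    rw [hset]
    exact isOpen_biUnion fun z _ => isOpen_Iio.preimage (hcont₂ z)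
  have mδ : Measurable δf := measurable_of_Iio fun a => (hδopen a).measurableSet
  -- φ/ψ basic facts
  have hφ0 : φ 0 = 0 := by
    by_contra h
    have h0 : 0 < φ 0 := lt_of_le_of_ne (hφ_nonneg 0 le_rfl) (Ne.symm h)
    obtain ⟨t, ht, hφt⟩ := hφ_surj (Set.mem_Ici.mpr (by positivity : (0:ℝ) ≤ φ 0 / 2))
    rcases eq_or_lt_of_le (Set.mem_Ici.mp ht) with h0t | h0t
    · rw [← h0t] at hφt; linarith
    · have h2 := hφ_mono (Set.mem_Ici.mpr le_rfl) ht h0t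
      rw [hφt] at h2; linarith
  have hψφ : ∀ t, 0 ≤ t → ψ (φ t) = t := fun t ht => hψ_inv.1 (Set.mem_Ici.mpr ht)
  have hφψ : ∀ s, 0 ≤ s → φ (ψ s) = s := fun s hs => hψ_inv.2 (Set.mem_Ici.mpr hs)
  have hψ0 : ψ 0 = 0 := by
    have h1 := hψφ 0 le_rfl
    rwa [hφ0] at h1
  have hψnonneg : ∀ s, 0 ≤ s → 0 ≤ ψ s := fun s hs => hψ_maps (Set.mem_Ici.mpr hs)
  have hψmono : StrictMonoOn ψ (Set.Ici 0) := by
    intro s hs s' hs' hss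
    by_contra hle
    push_neg at hle
    have h1 := hφ_mono.monotoneOn (hψ_maps hs') (hψ_maps hs) hle
    rw [hφψ s (Set.mem_Ici.mp hs), hφψ s' (Set.mem_Ici.mp hs')] at h1
    exact absurd h1 (not_le.mpr hss)
  have hψpos : ∀ s, 0 < s → 0 < ψ s := fun s hs => by
    have h1 := hψmono (Set.mem_Ici.mpr le_rfl) (Set.mem_Ici.mpr hs.le) hs
    rwa [hψ0] at h1
  have hψmono' : MonotoneOn ψ (Set.Ici 0) := hψmono.monotoneOn
  -- doubling iterate
  have hdoubN : ∀ n : ℕ, ∀ (x : X) (r : ℝ), 0 < r → r ≤ ρ₀ →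
      μ {y | d x y < r} ≤ (ENNReal.ofReal A) ^ n * μ {y | d x y < r / 2 ^ n} := by
    intro n
    induction n with
    | zero => intro x r _ _; simp
    | succ n ih =>
      intro x r hr hrρ
      have h1 := hdoub x r hr hrρ
      have h2 := ih x (r / 2) (half_pos hr) (by linarith)
      calc μ {y | d x y < r} ≤ ENNReal.ofReal A * μ {y | d x y < r / 2} := h1
        _ ≤ ENNReal.ofReal A * ((ENNReal.ofReal A) ^ n * μ {y | d x y < r / 2 / 2 ^ n}) :=
            mul_le_mul_right h2 _
        _ = (ENNReal.ofReal A) ^ (n + 1) * μ {y | d x y < r / 2 ^ (n + 1)} := by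
            rw [div_div, show (2:ℝ) * 2 ^ n = 2 ^ (n+1) by ring]
            ring
  -- ψ doubling iterate
  have hψN : ∀ n : ℕ, ∀ s : ℝ, 0 ≤ s → 2 ^ n * s ≤ 2 * r₀ → ψ (2 ^ n * s) ≤ C₀ ^ n * ψ s := by
    intro n
    induction n with
    | zero => intro s hs _; simp
    | succ n ih =>
      intro s hs hsr
      have hle : 2 ^ n * s ≤ r₀ := by
        have h2 : (2:ℝ) * (2 ^ n * s) ≤ 2 * r₀ := by
          calc (2:ℝ) * (2 ^ n * s) = 2 ^ (n+1) * s := by ring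
            _ ≤ 2 * r₀ := hsr
        linarith
      have h1 : ψ (2 ^ (n+1) * s) ≤ C₀ * ψ (2 ^ n * s) := by
        have h3 := hψ_doub (2 ^ n * s) (mul_nonneg (by positivity) hs) hle
        rw [show (2:ℝ) ^ (n+1) * s = 2 * (2 ^ n * s) by ring]
        exact h3
      have h2 : ψ (2 ^ n * s) ≤ C₀ ^ n * ψ s := ih s hs (by linarith)
      calc ψ (2 ^ (n+1) * s) ≤ C₀ * ψ (2 ^ n * s) := h1
        _ ≤ C₀ * (C₀ ^ n * ψ s) := mul_le_mul_of_nonneg_left h2 (by linarith)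
        _ = C₀ ^ (n+1) * ψ s := by ring
  -- constants
  set εp : ℝ := min ε₀ (1 / (2 * K)) with hεpdef
  have hεp_pos : 0 < εp := lt_min hε₀ (by positivity)
  have hεp_le : εp ≤ ε₀ := min_le_left _ _
  have hεpK : K * εp ≤ 1 / 2 := by
    have h := min_le_right ε₀ (1 / (2 * K))
    have h2 : εp * (2 * K) ≤ 1 := by
      rw [← le_div_iff₀ (by positivity : (0:ℝ) < 2 * K)]
      exact h
    nlinarith
  obtain ⟨n₂, hn₂⟩ := pow_unbounded_of_one_lt (1 / (3 * K * εp)) (one_lt_two (α := ℝ))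
  obtain ⟨m₁, hm₁⟩ := pow_unbounded_of_one_lt α (one_lt_two (α := ℝ))
  -- the density measure
  set Iν : X → ℝ≥0∞ := fun y => ENNReal.ofReal (δf y ^ γ * u y) with hIdef
  have hIν : ∀ y, Iν y = ENNReal.ofReal (δf y ^ γ * u y) := fun y => by rw [hIdef]
  set ν : Measure X := (μ.restrict Ω).withDensity Iν with hνdef
  have hν_apply : ∀ s : Set X, MeasurableSet s → s ⊆ Ω → ν s = ∫⁻ y in s, Iν y ∂μ := by
    intro s hs hsub
    rw [hνdef, withDensity_apply _ hs, Measure.restrict_restrict hs,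
      Set.inter_eq_self_of_subset_left hsub]
  have hν_fin : ν Set.univ < ⊤ := by
    rw [hνdef, withDensity_apply _ MeasurableSet.univ, Measure.restrict_univ]
    have he : ∀ x, Iν x = ENNReal.ofReal ((sInf ((d x) '' Ωᶜ)) ^ γ * u x) := fun x => by
      rw [hIν, hδf']
    calc (∫⁻ x, Iν x ∂μ.restrict Ω)
        = ∫⁻ x in Ω, ENNReal.ofReal ((sInf ((d x) '' Ωᶜ)) ^ γ * u x) ∂μ := by
          apply lintegral_congr; intro x; rw [he]
      _ < ⊤ := hint
  haveI : IsFiniteMeasure ν := ⟨hν_fin⟩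
  have hΩt_meas : ∀ t : ℝ, MeasurableSet {y | y ∈ Ω ∧ δf y < t} := fun t =>
    hΩopen.measurableSet.inter (hδopen t).measurableSet
  have hν_tend : Filter.Tendsto (fun n : ℕ => ν {y | y ∈ Ω ∧ δf y < 1 / ((n:ℝ) + 1)})
      Filter.atTop (nhds 0) := by
    have h0 : (⋂ n : ℕ, {y | y ∈ Ω ∧ δf y < 1 / ((n:ℝ) + 1)}) = ∅ := by
      ext y
      simp only [Set.mem_iInter, Set.mem_setOf_eq, Set.mem_empty_iff_false, iff_false]
      intro hall
      obtain ⟨n, hn⟩ := exists_nat_one_div_lt (hδ_pos y (hall 0).1)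
      exact absurd (hall n).2 (not_lt.mpr hn.le)
    have hanti : Antitone (fun n : ℕ => {y | y ∈ Ω ∧ δf y < 1 / ((n:ℝ) + 1)}) := by
      intro n m hnm y hy
      refine ⟨hy.1, lt_of_lt_of_le hy.2 ?_⟩
      apply one_div_le_one_div_of_le
      · positivity
      · have : (n:ℝ) ≤ (m:ℝ) := Nat.cast_le.mpr hnm
        linarith
    have ht := MeasureTheory.tendsto_measure_iInter_atTop (μ := ν)
      (fun n => (hΩt_meas _).nullMeasurableSet) hanti ⟨0, measure_ne_top ν _⟩
    rw [h0] at ht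
    simpa [Function.comp_def] using ht
  -- real power comparison
  have hrpow : ∀ a b : ℝ, 0 < a → 0 < b → a ≤ 2 * K * b → b ≤ 2 * K * a →
      a ^ γ ≤ (2 * K) ^ |γ| * b ^ γ := by
    intro a b ha hb hab hba
    rcases le_or_gt 0 γ with hγ | hγ
    · rw [abs_of_nonneg hγ]
      calc a ^ γ ≤ (2 * K * b) ^ γ := Real.rpow_le_rpow ha.le hab hγ
        _ = (2 * K) ^ γ * b ^ γ := Real.mul_rpow (by positivity) hb.le
    · rw [abs_of_neg hγ]
      have hx : (0:ℝ) < b / (2 * K) := by positivity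
      have hxy : b / (2 * K) ≤ a := by
        rw [div_le_iff₀ (by positivity : (0:ℝ) < 2 * K)]
        nlinarith
      calc a ^ γ ≤ (b / (2 * K)) ^ γ := Real.rpow_le_rpow_of_nonpos hx hxy hγ.le
        _ = b ^ γ / (2 * K) ^ γ := Real.div_rpow hb.le (by positivity : (0:ℝ) ≤ 2 * K) γ
        _ = (2 * K) ^ (-γ) * b ^ γ := by
            rw [Real.rpow_neg (by positivity : (0:ℝ) ≤ 2 * K)]
            rw [div_eq_mul_inv]; ring
  -- producing the limit from per-level bounds
  have htend : ∀ ζ : X,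
      (∀ k : ℕ, ∃ ρ : ℝ, 0 < ρ ∧ ∀ x, x ∈ Ω → φ (d x ζ) < α * δf x → δf x < ρ →
        Tf x ≤ ((k:ℝ≥0∞) + 1)⁻¹) →
      Filter.Tendsto (fun ρ : ℝ =>
        ⨆ x ∈ {x | x ∈ Ω ∧ φ (d x ζ) < α * δf x ∧ δf x < ρ}, Tf x)
        (nhdsWithin 0 (Set.Ioi 0)) (nhds 0) := by
    intro ζ hζ
    rw [ENNReal.tendsto_nhds_zero]
    intro ε hε
    obtain ⟨n, hn⟩ := ENNReal.exists_inv_nat_lt hε.ne'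
    obtain ⟨ρ₁, hρ₁, hbound⟩ := hζ n
    refine Filter.eventually_of_mem (Ioc_mem_nhdsGT_of_mem ⟨le_rfl, hρ₁⟩) ?_
    intro ρ hρ
    refine iSup₂_le ?_
    rintro x ⟨hx1, hx2, hx3⟩
    have hTx := hbound x hx1 hx2 (lt_of_lt_of_le hx3 hρ.2)
    refine le_trans hTx (le_trans ?_ hn.le)
    exact ENNReal.inv_le_inv' le_self_add
  -- MAIN CONTENT LEMMA
  have hcontent : ∀ k : ℕ, ∀ σ : ℝ≥0∞, 0 < σ →
      ∃ c : ℕ → Set X,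
        ({ζ | ∀ ρ' : ℝ, 0 < ρ' → ∃ x, (x ∈ Ω ∧ φ (d x ζ) < α * δf x ∧ δf x < ρ') ∧
            ((k:ℝ≥0∞) + 1)⁻¹ < Tf x} ∩ frontier Ω ⊆ ⋃ n, c n) ∧
        (∀ n, MeasurableSet (c n)) ∧ (∑' n, qdiam d (c n) ^ dd) ≤ σ := by
    intro k σ hσ
    set kk : ℝ≥0∞ := (k:ℝ≥0∞) + 1 with hkk
    have hkk0 : kk ≠ 0 := by simp [hkk]
    have hkktop : kk ≠ ⊤ := by
      rw [hkk]
      exact ENNReal.add_ne_top.mpr ⟨ENNReal.natCast_ne_top k, ENNReal.one_ne_top⟩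
    set Cg : ℝ := (2 * K) ^ |γ| with hCg
    have hCg_pos : 0 < Cg := Real.rpow_pos_of_pos (by linarith) _
    set lam : ℝ := K + 4 * K ^ 2 with hlam
    have hlam_pos : 0 < lam := by positivity
    set C₅ : ℝ≥0∞ := (ENNReal.ofReal A) ^ n₂ * ENNReal.ofReal K₁ * ENNReal.ofReal Cg with hC₅
    have hC₅top : C₅ ≠ ⊤ :=
      ENNReal.mul_ne_top (ENNReal.mul_ne_top (ENNReal.pow_ne_top ENNReal.ofReal_ne_top)
        ENNReal.ofReal_ne_top) ENNReal.ofReal_ne_top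
    set C₇ : ℝ≥0∞ := (ENNReal.ofReal (2 * K * lam * C₀ ^ m₁)) ^ dd with hC₇
    have hC₇top : C₇ ≠ ⊤ := ENNReal.rpow_ne_top_of_nonneg hdd.le ENNReal.ofReal_ne_top
    set C₉ : ℝ≥0∞ := C₇ * (kk * C₅) with hC₉
    have hC₉top : C₉ ≠ ⊤ := ENNReal.mul_ne_top hC₇top (ENNReal.mul_ne_top hkktop hC₅top)
    obtain ⟨N, hN⟩ : ∃ N : ℕ, C₉ * ν {y | y ∈ Ω ∧ δf y < 1 / ((N:ℝ) + 1)} ≤ σ := by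
      rcases eq_or_ne C₉ 0 with h0 | h0
      · exact ⟨0, by simp [h0]⟩
      · have hpos : 0 < σ / C₉ := ENNReal.div_pos hσ.ne' hC₉top
        obtain ⟨N, hN⟩ := (hν_tend.eventually_lt_const hpos).exists
        refine ⟨N, ?_⟩
        calc C₉ * ν {y | y ∈ Ω ∧ δf y < 1 / ((N:ℝ) + 1)} ≤ C₉ * (σ / C₉) :=
              mul_le_mul_right hN.le _
          _ ≤ σ := ENNReal.mul_le_of_le_div' (le_refl _)
    -- choose the scale ρc
    set ρc : ℝ := min (min ρ₀ (r₀ / 2 ^ m₁)) (1 / (((N:ℝ) + 1) * (2 * K))) with hρcdef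
    have hρcpos : 0 < ρc := lt_min (lt_min hρ₀ (by positivity)) (by positivity)
    have hρcρ₀ : ρc ≤ ρ₀ := le_trans (min_le_left _ _) (min_le_left _ _)
    have hρcr₀ : 2 ^ m₁ * ρc ≤ r₀ := by
      have h1 : ρc ≤ r₀ / 2 ^ m₁ := le_trans (min_le_left _ _) (min_le_right _ _)
      rw [le_div_iff₀ (by positivity : (0:ℝ) < 2 ^ m₁)] at h1
      linarith
    have hρcN : 2 * K * ρc ≤ 1 / ((N:ℝ) + 1) := by
      have h1 : ρc ≤ 1 / (((N:ℝ) + 1) * (2 * K)) := min_le_right _ _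
      have hN1 : (0:ℝ) < (N:ℝ) + 1 := by positivity
      rw [le_div_iff₀ (by positivity : (0:ℝ) < ((N:ℝ) + 1) * (2 * K))] at h1
      rw [le_div_iff₀ hN1]
      nlinarith
    set E' := {ζ | ∀ ρ' : ℝ, 0 < ρ' → ∃ x, (x ∈ Ω ∧ φ (d x ζ) < α * δf x ∧ δf x < ρ') ∧
        kk⁻¹ < Tf x} ∩ frontier Ω with hE'
    have hchoice : ∀ ζ ∈ E', ∃ x, (x ∈ Ω ∧ φ (d x ζ) < α * δf x ∧ δf x < ρc) ∧
        kk⁻¹ < Tf x := fun ζ hζ => hζ.1 ρc hρcpos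
    choose! xc hxc using hchoice
    have hxΩ : ∀ ζ ∈ E', xc ζ ∈ Ω := fun ζ h => ((hxc ζ h).1).1
    have hxcone : ∀ ζ ∈ E', φ (d (xc ζ) ζ) < α * δf (xc ζ) := fun ζ h => ((hxc ζ h).1).2.1
    have hxδρ : ∀ ζ ∈ E', δf (xc ζ) < ρc := fun ζ h => ((hxc ζ h).1).2.2
    have hxT : ∀ ζ ∈ E', kk⁻¹ < Tf (xc ζ) := fun ζ h => (hxc ζ h).2
    have hxδpos : ∀ ζ ∈ E', 0 < δf (xc ζ) := fun ζ h => hδ_pos _ (hxΩ ζ h)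
    have hζΩc : ∀ ζ ∈ E', ζ ∈ Ωᶜ := by
      intro ζ h
      have h2 := h.2
      rw [hΩopen.frontier_eq] at h2
      exact h2.2
    have hδle : ∀ ζ ∈ E', δf (xc ζ) ≤ d (xc ζ) ζ := fun ζ h => hδ_le _ _ (hζΩc ζ h)
    have hφδ : ∀ ζ ∈ E', φ (δf (xc ζ)) < α * δf (xc ζ) := by
      intro ζ h
      exact lt_of_le_of_lt (hφ_mono.monotoneOn (Set.mem_Ici.mpr (hδ_nonneg _))
        (Set.mem_Ici.mpr (hd_nonneg _ _)) (hδle ζ h)) (hxcone ζ h)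
    have hδltψ : ∀ ζ ∈ E', δf (xc ζ) < ψ (α * δf (xc ζ)) := by
      intro ζ h
      have h1 := hψmono (Set.mem_Ici.mpr (hφ_nonneg _ (hδ_nonneg _)))
        (Set.mem_Ici.mpr (mul_nonneg hα.le (hδ_nonneg _))) (hφδ ζ h)
      rwa [hψφ _ (hδ_nonneg _)] at h1
    have hdlt : ∀ ζ ∈ E', d (xc ζ) ζ < ψ (α * δf (xc ζ)) := by
      intro ζ h
      have h1 := hψmono (Set.mem_Ici.mpr (hφ_nonneg _ (hd_nonneg _ _)))
        (Set.mem_Ici.mpr (mul_nonneg hα.le (hδ_nonneg _))) (hxcone ζ h)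
      rwa [hψφ _ (hd_nonneg _ _)] at h1
    set rr : X → ℝ := fun ζ => min ρ₀ (εp * δf (xc ζ)) with hrr
    have hrrpos : ∀ ζ ∈ E', 0 < rr ζ := fun ζ h => lt_min hρ₀ (mul_pos hεp_pos (hxδpos ζ h))
    have hrrle : ∀ ζ, rr ζ ≤ εp * δf (xc ζ) := fun ζ => min_le_right _ _
    have hεphalf : εp ≤ 1 / 2 := by nlinarith [hεpK, hεp_pos, hK]
    have hrrδ : ∀ ζ ∈ E', rr ζ ≤ δf (xc ζ) / 2 := by
      intro ζ h
      have h1 : εp * δf (xc ζ) ≤ (1/2) * δf (xc ζ) :=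
        mul_le_mul_of_nonneg_right hεphalf (hδ_nonneg _)
      calc rr ζ ≤ εp * δf (xc ζ) := min_le_right _ _
        _ ≤ δf (xc ζ) / 2 := by linarith
    have hball_in : ∀ ζ ∈ E', ∀ y, d (xc ζ) y < rr ζ →
        (δf (xc ζ) / (2 * K) ≤ δf y ∧ δf y ≤ 2 * K * δf (xc ζ) ∧ y ∈ Ω) := by
      intro ζ h y hy
      have hδz := hxδpos ζ h
      have hdyz : d (xc ζ) y ≤ εp * δf (xc ζ) := le_of_lt (lt_of_lt_of_le hy (hrrle ζ))
      have hup : δf y ≤ 2 * K * δf (xc ζ) := by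
        have h1 := hquasi y (xc ζ)
        have h2 : d y (xc ζ) ≤ δf (xc ζ) := by
          rw [hd_symm y (xc ζ)]
          nlinarith [hεphalf]
        nlinarith [hδ_nonneg (xc ζ), hK]
      have hlo : δf (xc ζ) / (2 * K) ≤ δf y := by
        have h1 := hquasi (xc ζ) y
        have h2 : K * d (xc ζ) y ≤ δf (xc ζ) / 2 := by
          have h3 := mul_le_mul_of_nonneg_left hdyz hK0.le
          nlinarith [hεpK, hδ_nonneg (xc ζ)]
        rw [div_le_iff₀ (by positivity : (0:ℝ) < 2 * K)]
        nlinarith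
      refine ⟨hlo, hup, hδ_mem y (lt_of_lt_of_le (by positivity) hlo)⟩
    -- core inequality
    have hcore : ∀ ζ ∈ E', ENNReal.ofReal (ψ (δf (xc ζ)) ^ dd) ≤
        kk * C₅ * ν {y | d (xc ζ) y < rr ζ} := by
      intro ζ h
      have hδz : 0 < δf (xc ζ) := hxδpos ζ h
      have hψz : 0 < ψ (δf (xc ζ)) := hψpos _ hδz
      have hrr_le : rr ζ ≤ min ρ₀ (ε₀ * sInf ((d (xc ζ)) '' Ωᶜ)) := by
        rw [← hδf' (xc ζ)]
        refine le_min (min_le_left _ _) (le_trans (min_le_right _ _) ?_)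
        exact mul_le_mul_of_nonneg_right hεp_le hδz.le
      obtain ⟨-, hq⟩ := hqns Ω hΩopen hΩuniv (xc ζ) (hxΩ ζ h) (rr ζ) (hrrpos ζ h) hrr_le
      have h2n : (1:ℝ) ≤ 2 ^ n₂ := one_le_pow₀ one_le_two
      have h3K : (1:ℝ) ≤ 3 * K := by linarith
      have hd1 : μ {y | d (xc ζ) y < δf (xc ζ) / (3 * K)} ≤
          (ENNReal.ofReal A) ^ n₂ * μ {y | d (xc ζ) y < δf (xc ζ) / (3 * K) / 2 ^ n₂} := by
        apply hdoubN n₂ (xc ζ) _ (by positivity)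
        calc δf (xc ζ) / (3 * K) ≤ δf (xc ζ) := div_le_self hδz.le h3K
          _ ≤ ρ₀ := le_trans (hxδρ ζ h).le hρcρ₀
      have hd2 : μ {y | d (xc ζ) y < δf (xc ζ) / (3 * K) / 2 ^ n₂} ≤
          μ {y | d (xc ζ) y < rr ζ} := by
        apply measure_mono
        intro y hy
        simp only [Set.mem_setOf_eq] at hy ⊢
        refine lt_of_lt_of_le hy (le_min ?_ ?_)
        · calc δf (xc ζ) / (3 * K) / 2 ^ n₂ ≤ δf (xc ζ) := by
                rw [div_div]
                exact div_le_self hδz.le (by nlinarith)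
            _ ≤ ρ₀ := le_trans (hxδρ ζ h).le hρcρ₀
        · rw [div_div, div_le_iff₀ (by positivity : (0:ℝ) < 3 * K * 2 ^ n₂)]
          have h4 : 1 ≤ εp * (3 * K * 2 ^ n₂) := by
            rw [div_lt_iff₀ (by positivity : (0:ℝ) < 3 * K * εp)] at hn₂
            nlinarith
          nlinarith
      have hq2 : ENNReal.ofReal (u (xc ζ)) * μ {y | d (xc ζ) y < δf (xc ζ) / (3 * K)} ≤
          (ENNReal.ofReal A) ^ n₂ * (ENNReal.ofReal K₁ *
            ∫⁻ y in {y | d (xc ζ) y < rr ζ}, ENNReal.ofReal (u y) ∂μ) := by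
        calc ENNReal.ofReal (u (xc ζ)) * μ {y | d (xc ζ) y < δf (xc ζ) / (3 * K)}
            ≤ ENNReal.ofReal (u (xc ζ)) *
              ((ENNReal.ofReal A) ^ n₂ * μ {y | d (xc ζ) y < rr ζ}) :=
              mul_le_mul_right (le_trans hd1 (mul_le_mul_right hd2 _)) _
          _ = (ENNReal.ofReal A) ^ n₂ *
              (ENNReal.ofReal (u (xc ζ)) * μ {y | d (xc ζ) y < rr ζ}) := by ring
          _ ≤ (ENNReal.ofReal A) ^ n₂ * (ENNReal.ofReal K₁ *
              ∫⁻ y in {y | d (xc ζ) y < rr ζ}, ENNReal.ofReal (u y) ∂μ) :=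
              mul_le_mul_right hq _
      have hsubΩ : {y | d (xc ζ) y < rr ζ} ⊆ Ω := fun y hy => (hball_in ζ h y hy).2.2
      have hptw : (∫⁻ y in {y | d (xc ζ) y < rr ζ},
            ENNReal.ofReal (δf (xc ζ) ^ γ) * ENNReal.ofReal (u y) ∂μ) ≤
          ENNReal.ofReal Cg * ν {y | d (xc ζ) y < rr ζ} := by
        rw [hν_apply _ (hballmeas (xc ζ) (rr ζ)) hsubΩ]
        rw [← lintegral_const_mul' _ _ ENNReal.ofReal_ne_top]
        apply setLIntegral_mono' (hballmeas (xc ζ) (rr ζ))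
        intro y hy
        obtain ⟨hlo, hup, hyΩ⟩ := hball_in ζ h y hy
        have hδy : 0 < δf y := lt_of_lt_of_le (by positivity) hlo
        rw [hIν, ← ENNReal.ofReal_mul (Real.rpow_nonneg (hδ_nonneg (xc ζ)) γ),
          ← ENNReal.ofReal_mul hCg_pos.le]
        apply ENNReal.ofReal_le_ofReal
        have hp := hrpow (δf (xc ζ)) (δf y) hδz hδy
          (by rw [div_le_iff₀ (by positivity : (0:ℝ) < 2 * K)] at hlo; nlinarith) hup
        calc δf (xc ζ) ^ γ * u y ≤ ((2 * K) ^ |γ| * δf y ^ γ) * u y :=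
              mul_le_mul_of_nonneg_right hp (hu_nonneg y)
          _ = Cg * (δf y ^ γ * u y) := by rw [hCg]; ring
      have hmain : ENNReal.ofReal (δf (xc ζ) ^ γ) *
          (ENNReal.ofReal (u (xc ζ)) * μ {y | d (xc ζ) y < δf (xc ζ) / (3 * K)}) ≤
          C₅ * ν {y | d (xc ζ) y < rr ζ} := by
        calc ENNReal.ofReal (δf (xc ζ) ^ γ) *
            (ENNReal.ofReal (u (xc ζ)) * μ {y | d (xc ζ) y < δf (xc ζ) / (3 * K)})
            ≤ ENNReal.ofReal (δf (xc ζ) ^ γ) * ((ENNReal.ofReal A) ^ n₂ * (ENNReal.ofReal K₁ *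
              ∫⁻ y in {y | d (xc ζ) y < rr ζ}, ENNReal.ofReal (u y) ∂μ)) :=
              mul_le_mul_right hq2 _
          _ = (ENNReal.ofReal A) ^ n₂ * ENNReal.ofReal K₁ *
              ∫⁻ y in {y | d (xc ζ) y < rr ζ},
                ENNReal.ofReal (δf (xc ζ) ^ γ) * ENNReal.ofReal (u y) ∂μ := by
              rw [lintegral_const_mul' (ENNReal.ofReal (δf (xc ζ) ^ γ)) _
                ENNReal.ofReal_ne_top]
              ring
          _ ≤ (ENNReal.ofReal A) ^ n₂ * ENNReal.ofReal K₁ *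
              (ENNReal.ofReal Cg * ν {y | d (xc ζ) y < rr ζ}) := mul_le_mul_right hptw _
          _ = C₅ * ν {y | d (xc ζ) y < rr ζ} := by rw [hC₅]; ring
      have hsplit : ENNReal.ofReal (δf (xc ζ) ^ γ * ψ (δf (xc ζ)) ^ (-dd) * u (xc ζ)) =
          ENNReal.ofReal (ψ (δf (xc ζ)) ^ (-dd)) *
            (ENNReal.ofReal (δf (xc ζ) ^ γ) * ENNReal.ofReal (u (xc ζ))) := by
        rw [show δf (xc ζ) ^ γ * ψ (δf (xc ζ)) ^ (-dd) * u (xc ζ) =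
          ψ (δf (xc ζ)) ^ (-dd) * (δf (xc ζ) ^ γ * u (xc ζ)) by ring]
        rw [ENNReal.ofReal_mul (Real.rpow_nonneg hψz.le _),
          ENNReal.ofReal_mul (Real.rpow_nonneg (hδ_nonneg _) γ)]
      have hone : ENNReal.ofReal (ψ (δf (xc ζ)) ^ dd) *
          ENNReal.ofReal (ψ (δf (xc ζ)) ^ (-dd)) = 1 := by
        rw [← ENNReal.ofReal_mul (Real.rpow_nonneg hψz.le _), ← Real.rpow_add hψz,
          add_neg_cancel, Real.rpow_zero, ENNReal.ofReal_one]
      calc ENNReal.ofReal (ψ (δf (xc ζ)) ^ dd)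
          = ENNReal.ofReal (ψ (δf (xc ζ)) ^ dd) * (kk⁻¹ * kk) := by
            rw [ENNReal.inv_mul_cancel hkk0 hkktop, mul_one]
        _ ≤ ENNReal.ofReal (ψ (δf (xc ζ)) ^ dd) * (Tf (xc ζ) * kk) :=
            mul_le_mul_right (mul_le_mul_left (hxT ζ h).le kk) _
        _ = kk * (ENNReal.ofReal (ψ (δf (xc ζ)) ^ dd) * Tf (xc ζ)) := by ring
        _ = kk * ((ENNReal.ofReal (ψ (δf (xc ζ)) ^ dd) *
              ENNReal.ofReal (ψ (δf (xc ζ)) ^ (-dd))) *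
              (ENNReal.ofReal (δf (xc ζ) ^ γ) * (ENNReal.ofReal (u (xc ζ)) *
                μ {y | d (xc ζ) y < δf (xc ζ) / (3 * K)}))) := by
            rw [hT' (xc ζ), hsplit]; ring
        _ = kk * (ENNReal.ofReal (δf (xc ζ) ^ γ) * (ENNReal.ofReal (u (xc ζ)) *
              μ {y | d (xc ζ) y < δf (xc ζ) / (3 * K)})) := by rw [hone, one_mul]
        _ ≤ kk * (C₅ * ν {y | d (xc ζ) y < rr ζ}) := mul_le_mul_right hmain _
        _ = kk * C₅ * ν {y | d (xc ζ) y < rr ζ} := by ring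
    -- Vitali covering
    set Rf : X → ℝ := fun ζ => ψ (α * δf (xc ζ)) with hRf
    have hRpos : ∀ ζ ∈ E', 0 < Rf ζ := fun ζ h => hψpos _ (mul_pos hα (hxδpos ζ h))
    obtain ⟨v, hvE, hvdisj, hvcov⟩ :=
      Vitali.exists_disjoint_subfamily_covering_enlargement
        (fun ζ => {y | d (xc ζ) y < Rf ζ}) E' Rf 2 one_lt_two
        (fun ζ h => (hRpos ζ h).le) (ψ (α * ρc))
        (fun ζ h => hψmono' (Set.mem_Ici.mpr (mul_nonneg hα.le (hδ_nonneg _)))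
          (Set.mem_Ici.mpr (mul_nonneg hα.le hρcpos.le))
          (mul_le_mul_of_nonneg_left (hxδρ ζ h).le hα.le))
        (fun ζ h => ⟨xc ζ, by simp only [Set.mem_setOf_eq, hself]; exact hRpos ζ h⟩)
    have hsmall_sub : ∀ ζ ∈ E', {y | d (xc ζ) y < rr ζ} ⊆ {y | d (xc ζ) y < Rf ζ} := by
      intro ζ h y hy
      simp only [Set.mem_setOf_eq] at hy ⊢
      refine lt_of_lt_of_le hy ?_
      calc rr ζ ≤ δf (xc ζ) / 2 := hrrδ ζ h
        _ ≤ δf (xc ζ) := by linarith [hxδpos ζ h]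
        _ ≤ Rf ζ := (hδltψ ζ h).le
    have hνball_pos : ∀ ζ ∈ E', 0 < ν {y | d (xc ζ) y < Rf ζ} := by
      intro ζ h
      have h1 := hcore ζ h
      have h2 : 0 < ENNReal.ofReal (ψ (δf (xc ζ)) ^ dd) := by
        rw [ENNReal.ofReal_pos]
        exact Real.rpow_pos_of_pos (hψpos _ (hxδpos ζ h)) dd
      by_contra h0
      push_neg at h0
      have h3 : ν {y | d (xc ζ) y < rr ζ} = 0 :=
        le_antisymm (le_trans (measure_mono (hsmall_sub ζ h)) h0) zero_le
      rw [h3, mul_zero] at h1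
      exact absurd h1 (not_le.mpr h2)
    have hvcount : v.Countable := by
      have hc := MeasureTheory.Measure.countable_meas_pos_of_disjoint_of_meas_iUnion_ne_top
        (μ := ν) (As := fun b : ↥v => {y | d (xc ↑b) y < Rf ↑b})
        (fun b => hballmeas _ _)
        (fun i j hij => hvdisj i.2 j.2 (Subtype.coe_injective.ne hij))
          (ne_top_of_le_ne_top hν_fin.ne (measure_mono (Set.subset_univ _)))
      have hall : {b : ↥v | 0 < ν {y | d (xc ↑b) y < Rf ↑b}} = Set.univ := by
        ext b
        simp only [Set.mem_setOf_eq, Set.mem_univ, iff_true]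
        exact hνball_pos ↑b (hvE b.2)
      rw [hall] at hc
      rw [← Set.countable_coe_iff]
      exact Set.countable_univ_iff.mp hc
    haveI hven : Encodable ↥v := hvcount.toEncodable
    set Big : X → Set X := fun ζ => {y | d (xc ζ) y < lam * Rf ζ} with hBig
    set cfun : ℕ → Set X := fun n => ⋃ (b : ↥v) (_ : Encodable.encode b = n), Big ↑b with hcfun
    have hceq : ∀ b : ↥v, cfun (Encodable.encode b) = Big ↑b := by
      intro b
      apply subset_antisymm
      · intro y hy
        simp only [hcfun, Set.mem_iUnion] at hy
        obtain ⟨b', hb', hy'⟩ := hy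
        rwa [Encodable.encode_injective hb'] at hy'
      · intro y hy
        simp only [hcfun, Set.mem_iUnion]
        exact ⟨b, rfl, hy⟩
    have hcempty : ∀ n : ℕ, n ∉ Set.range (fun b : ↥v => Encodable.encode b) → cfun n = ∅ := by
      intro n hn
      ext y
      simp only [hcfun, Set.mem_iUnion, Set.mem_empty_iff_false, iff_false]
      rintro ⟨b, hb, -⟩
      exact hn ⟨b, hb⟩
    refine ⟨cfun, ?_, ?_, ?_⟩
    · -- coverage
      intro ζ hζ
      obtain ⟨b, hbv, hinter, hle2⟩ := hvcov ζ hζ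
      obtain ⟨z0, hz0a, hz0b⟩ := hinter
      have hbE : b ∈ E' := hvE hbv
      simp only [Set.mem_setOf_eq] at hz0a hz0b
      have hζa : d (xc ζ) ζ < Rf ζ := hdlt ζ hζ
      have hkey : d (xc b) ζ < lam * Rf b := by
        have t1 : d (xc b) ζ ≤ K * (d (xc b) z0 + d z0 ζ) := hd_tri _ _ _
        have t2 : d z0 ζ ≤ K * (d z0 (xc ζ) + d (xc ζ) ζ) := hd_tri _ _ _
        have t3 : d z0 (xc ζ) = d (xc ζ) z0 := hd_symm _ _
        have hRb := hRpos b hbE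
        have s1 : d z0 ζ ≤ K * (d (xc ζ) z0 + d (xc ζ) ζ) := by rw [← t3]; exact t2
        calc d (xc b) ζ ≤ K * (d (xc b) z0 + d z0 ζ) := t1
          _ ≤ K * (d (xc b) z0 + K * (d (xc ζ) z0 + d (xc ζ) ζ)) := by
              apply mul_le_mul_of_nonneg_left _ hK0.le
              linarith
          _ < K * (Rf b + K * (Rf ζ + Rf ζ)) := by
              apply mul_lt_mul_of_pos_left _ hK0
              have i0 : d (xc ζ) z0 + d (xc ζ) ζ < Rf ζ + Rf ζ := add_lt_add hz0a hζa
              have i1 : K * (d (xc ζ) z0 + d (xc ζ) ζ) ≤ K * (Rf ζ + Rf ζ) :=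
                mul_le_mul_of_nonneg_left i0.le hK0.le
              linarith
          _ ≤ K * (Rf b + K * (2 * (2 * Rf b))) := by
              apply mul_le_mul_of_nonneg_left _ hK0.le
              have i2 : Rf ζ + Rf ζ ≤ 2 * (2 * Rf b) := by linarith [hle2]
              have i3 : K * (Rf ζ + Rf ζ) ≤ K * (2 * (2 * Rf b)) :=
                mul_le_mul_of_nonneg_left i2 hK0.le
              linarith
          _ = lam * Rf b := by rw [hlam]; ring
      apply Set.mem_iUnion.mpr
      refine ⟨Encodable.encode (⟨b, hbv⟩ : ↥v), ?_⟩
      rw [hceq]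
      exact hkey
    · -- measurability
      intro n
      exact MeasurableSet.iUnion fun b => MeasurableSet.iUnion fun _ => hballmeas _ _
    · -- total sum bound
      have hqzero : qdiam d (∅ : Set X) ^ dd = 0 := by
        have : qdiam d (∅ : Set X) = 0 := by simp [qdiam]
        rw [this]
        exact ENNReal.zero_rpow_of_pos hdd
      have h1 := Function.Injective.tsum_eq
        (g := fun b : ↥v => Encodable.encode b)
        (f := fun n => qdiam d (cfun n) ^ dd)
        Encodable.encode_injective
        (by
          intro n hn
          rw [Function.mem_support] at hn
          by_contra hcon
          exact hn (by rw [hcempty n hcon]; exact hqzero))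
      simp only [hceq] at h1
      rw [← h1]
      -- bound each term
      have hterm : ∀ b : ↥v, qdiam d (Big ↑b) ^ dd ≤
          C₇ * (kk * C₅ * ν {y | d (xc ↑b) y < rr ↑b}) := by
        intro b
        have hbE : (↑b : X) ∈ E' := hvE b.2
        have hδb := hxδpos _ hbE
        have hq1 : qdiam d (Big ↑b) ≤ ENNReal.ofReal (2 * K * (lam * Rf ↑b)) := by
          refine iSup₂_le fun y hy => iSup₂_le fun w hw => ?_
          apply ENNReal.ofReal_le_ofReal
          simp only [hBig, Set.mem_setOf_eq] at hy hw
          calc d y w ≤ K * (d y (xc ↑b) + d (xc ↑b) w) := hd_tri y w _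
            _ = K * (d (xc ↑b) y + d (xc ↑b) w) := by rw [hd_symm y]
            _ ≤ K * (lam * Rf ↑b + lam * Rf ↑b) :=
                mul_le_mul_of_nonneg_left (by linarith) hK0.le
            _ = 2 * K * (lam * Rf ↑b) := by ring
        have hψα : Rf ↑b ≤ C₀ ^ m₁ * ψ (δf (xc ↑b)) := by
          have hh1 : α * δf (xc ↑b) ≤ 2 ^ m₁ * δf (xc ↑b) :=
            mul_le_mul_of_nonneg_right hm₁.le (hδ_nonneg _)
          have hh2 : ψ (α * δf (xc ↑b)) ≤ ψ (2 ^ m₁ * δf (xc ↑b)) :=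
            hψmono' (Set.mem_Ici.mpr (mul_nonneg hα.le (hδ_nonneg _)))
              (Set.mem_Ici.mpr (mul_nonneg (by positivity) (hδ_nonneg _))) hh1
          have hh3 : 2 ^ m₁ * δf (xc ↑b) ≤ 2 * r₀ := by
            have hh4 : 2 ^ m₁ * δf (xc ↑b) ≤ 2 ^ m₁ * ρc :=
              mul_le_mul_of_nonneg_left (hxδρ _ hbE).le (by positivity)
            linarith [hρcr₀, hr₀]
          exact le_trans hh2 (hψN m₁ _ (hδ_nonneg _) hh3)
        have hψb : 0 < ψ (δf (xc ↑b)) := hψpos _ hδb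
        have hq2 : ENNReal.ofReal (2 * K * (lam * Rf ↑b)) ≤
            ENNReal.ofReal (2 * K * lam * C₀ ^ m₁) * ENNReal.ofReal (ψ (δf (xc ↑b))) := by
          rw [← ENNReal.ofReal_mul (by positivity)]
          apply ENNReal.ofReal_le_ofReal
          calc 2 * K * (lam * Rf ↑b) ≤ 2 * K * (lam * (C₀ ^ m₁ * ψ (δf (xc ↑b)))) := by
                apply mul_le_mul_of_nonneg_left _ (by positivity)
                exact mul_le_mul_of_nonneg_left hψα hlam_pos.le
            _ = 2 * K * lam * C₀ ^ m₁ * ψ (δf (xc ↑b)) := by ring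
        calc qdiam d (Big ↑b) ^ dd
            ≤ (ENNReal.ofReal (2 * K * lam * C₀ ^ m₁) * ENNReal.ofReal (ψ (δf (xc ↑b)))) ^ dd :=
              ENNReal.rpow_le_rpow (le_trans hq1 hq2) hdd.le
          _ = C₇ * (ENNReal.ofReal (ψ (δf (xc ↑b)))) ^ dd := by
              rw [ENNReal.mul_rpow_of_nonneg _ _ hdd.le, hC₇]
          _ = C₇ * ENNReal.ofReal (ψ (δf (xc ↑b)) ^ dd) := by
              rw [ENNReal.ofReal_rpow_of_pos hψb]
          _ ≤ C₇ * (kk * C₅ * ν {y | d (xc ↑b) y < rr ↑b}) :=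
              mul_le_mul_right (hcore _ hbE) _
      have hdisj_small :
          Pairwise (Function.onFun Disjoint (fun b : ↥v => {y | d (xc ↑b) y < rr ↑b})) := by
        intro i j hij
        exact Disjoint.mono (hsmall_sub _ (hvE i.2)) (hsmall_sub _ (hvE j.2))
          (hvdisj i.2 j.2 (Subtype.coe_injective.ne hij))
      have hsum_small : (∑' b : ↥v, ν {y | d (xc ↑b) y < rr ↑b}) ≤
          ν {y | y ∈ Ω ∧ δf y < 1 / ((N:ℝ) + 1)} := by
        rw [← measure_iUnion hdisj_small (fun b => hballmeas _ _)]
        apply measure_mono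
        apply Set.iUnion_subset
        intro b y hy
        have hbE := hvE b.2
        obtain ⟨hlo, hup, hyΩ⟩ := hball_in _ hbE y hy
        refine ⟨hyΩ, ?_⟩
        have hh1 : δf (xc ↑b) < ρc := hxδρ _ hbE
        have hh2 : 2 * K * δf (xc ↑b) < 2 * K * ρc := by nlinarith
        linarith [hρcN]
      calc (∑' b : ↥v, qdiam d (Big ↑b) ^ dd)
          ≤ ∑' b : ↥v, C₇ * (kk * C₅ * ν {y | d (xc ↑b) y < rr ↑b}) :=
            ENNReal.tsum_le_tsum hterm
        _ = C₉ * ∑' b : ↥v, ν {y | d (xc ↑b) y < rr ↑b} := by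
            rw [hC₉, ← ENNReal.tsum_mul_left]
            apply tsum_congr
            intro b
            ring
        _ ≤ C₉ * ν {y | y ∈ Ω ∧ δf y < 1 / ((N:ℝ) + 1)} := mul_le_mul_right hsum_small _
        _ ≤ σ := hN
  -- from content to measurable null G-sets
  have hG : ∀ k : ℕ, ∃ G : Set X, MeasurableSet G ∧
      ({ζ | ∀ ρ' : ℝ, 0 < ρ' → ∃ x, (x ∈ Ω ∧ φ (d x ζ) < α * δf x ∧ δf x < ρ') ∧
          ((k:ℝ≥0∞) + 1)⁻¹ < Tf x} ∩ frontier Ω ⊆ G) ∧ hausdorffQ d dd G = 0 := by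
    intro k
    have hjpos : ∀ j : ℕ, (0:ℝ≥0∞) < ((j:ℝ≥0∞) + 1)⁻¹ := by
      intro j
      rw [ENNReal.inv_pos]
      exact ENNReal.add_ne_top.mpr ⟨ENNReal.natCast_ne_top j, ENNReal.one_ne_top⟩
    choose c hcsub hcmeas hcsum using fun j : ℕ => hcontent k ((j:ℝ≥0∞) + 1)⁻¹ (hjpos j)
    refine ⟨⋂ j, ⋃ n, c j n,
      MeasurableSet.iInter (fun j => MeasurableSet.iUnion (hcmeas j)),
      Set.subset_iInter (fun j => hcsub j), ?_⟩
    have hle : ∀ ε : ℝ≥0∞, 0 < ε → hausdorffQ d dd (⋂ j, ⋃ n, c j n) ≤ ε := by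
      intro ε hε
      refine iSup_le fun δ' => iSup_le fun hδ' => ?_
      have hδdd : 0 < δ' ^ dd := by
        rcases eq_or_ne δ' ⊤ with rfl | hne
        · rw [ENNReal.top_rpow_of_pos hdd]; exact ENNReal.zero_lt_top
        · exact ENNReal.rpow_pos hδ' hne
      obtain ⟨m, hm⟩ := ENNReal.exists_inv_nat_lt (ne_of_gt (lt_min hε hδdd))
      have hmle : ((m:ℝ≥0∞) + 1)⁻¹ ≤ (m:ℝ≥0∞)⁻¹ := ENNReal.inv_le_inv' le_self_add
      have hsm : (∑' n, qdiam d (c m n) ^ dd) ≤ min ε (δ' ^ dd) :=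
        le_trans (hcsum m) (le_trans hmle hm.le)
      have hfine : ∀ n, qdiam d (c m n) ≤ δ' := by
        intro n
        have h1 : qdiam d (c m n) ^ dd ≤ δ' ^ dd :=
          le_trans (ENNReal.le_tsum n) (le_trans hsm (min_le_right _ _))
        exact (ENNReal.rpow_le_rpow_iff hdd).mp h1
      refine le_trans (le_trans (iInf_le _ (c m)) (le_trans (iInf_le _
        (Set.iInter_subset _ m)) (iInf_le _ hfine))) ?_
      exact le_trans hsm (min_le_left _ _)
    by_contra hne
    have h1 : hausdorffQ d dd (⋂ j, ⋃ n, c j n) ≤ 1 := hle 1 one_pos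
    have h2 := hle _ (ENNReal.half_pos hne)
    exact absurd h2 (not_le.mpr (ENNReal.half_lt_self hne
      (ne_top_of_le_ne_top ENNReal.one_ne_top h1)))
  choose G hGmeas hGsub hG0 using hG
  -- final assembly
  rw [MeasureTheory.ae_iff]
  have hnull : (H.restrict (frontier Ω)) ((⋃ k, G k) ∪ (frontier Ω)ᶜ) = 0 := by
    apply measure_union_null
    · apply measure_iUnion_null
      intro k
      rw [Measure.restrict_apply (hGmeas k)]
      have h1 : H (G k ∩ frontier Ω) ≤ H (G k) := measure_mono Set.inter_subset_left
      have h2 : H (G k) = 0 := by rw [hH _ (hGmeas k)]; exact hG0 k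
      exact le_antisymm (h2 ▸ h1) zero_le
    · rw [Measure.restrict_apply isClosed_frontier.measurableSet.compl]
      simp
  refine measure_mono_null ?_ hnull
  · intro ζ hζ
    simp only [Set.mem_setOf_eq] at hζ
    by_cases hfr : ζ ∈ frontier Ω
    · left
      have hnT : ¬ Filter.Tendsto (fun ρ : ℝ =>
          ⨆ x ∈ {x | x ∈ Ω ∧ φ (d x ζ) < α * δf x ∧ δf x < ρ}, Tf x)
          (nhdsWithin 0 (Set.Ioi 0)) (nhds 0) := fun h => hζ (fun _ => h)
      by_contra hcon
      simp only [Set.mem_iUnion, not_exists] at hcon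
      apply hnT
      apply htend ζ
      intro k
      have hnk : ¬ (∀ ρ' : ℝ, 0 < ρ' → ∃ x, (x ∈ Ω ∧ φ (d x ζ) < α * δf x ∧ δf x < ρ') ∧
          ((k:ℝ≥0∞) + 1)⁻¹ < Tf x) := fun hin => hcon k (hGsub k ⟨hin, hfr⟩)
      push_neg at hnk
      obtain ⟨ρ', hρ'pos, hall⟩ := hnk
      exact ⟨ρ', hρ'pos, fun x h1 h2 h3 => hall x ⟨h1, h2, h3⟩⟩
    · right; exact hfr
end
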